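/- arXiv:math/0108025 — 13 statements merged into one kernel-verified Lean document; each statement's English description precedes it below -/
import Mathlib

section
/- Let P : [0,∞)×[0,∞) → [0,∞) be symmetric and moderately increasing in each variable. Then P is continuous on (0,∞)×(0,∞). -/
/-!
On the box `[x₀ / L, L x₀] × [y₀ / L, L y₀]`, monotonicity and the decrease of `P x y / y` in
each variable, glued together by symmetry, trap `P` between `P x₀ y₀ / L ^ 2` and
`L ^ 2 * P x₀ y₀`. These boxes are neighbourhoods of `(x₀, y₀)`, and letting `L ↓ 1` squeezes `P`
to `P x₀ y₀`.
-/

open Set Filter Topology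

def ModeratelyIncreasing (f : ℝ → ℝ) : Prop :=
  MonotoneOn f (Ioi 0) ∧ AntitoneOn (fun y => f y / y) (Ioi 0)

lemma le_div_mul_of_antitoneOn_div {f : ℝ → ℝ} (hf : AntitoneOn (fun y => f y / y) (Ioi 0))
    {a b : ℝ} (ha : 0 < a) (hab : a ≤ b) : f b ≤ b / a * f a := by
  have hb : 0 < b := ha.trans_le hab
  have h : f b / b ≤ f a / a := hf ha hb hab
  rw [div_le_div_iff₀ hb ha] at h
  rw [div_mul_eq_mul_div, le_div_iff₀ ha]
  linarith

namespace ModeratelyIncreasing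

variable {f : ℝ → ℝ}

lemma mem_Icc_of_mem_Icc (hf : ModeratelyIncreasing f) {L a y : ℝ} (hL : 1 ≤ L) (ha : 0 < a)
    (hy : y ∈ Icc (a / L) (L * a)) : f y ∈ Icc (f a / L) (L * f a) := by
  have hL₀ : 0 < L := one_pos.trans_le hL
  have haL : 0 < a / L := div_pos ha hL₀
  have hy₀ : 0 < y := haL.trans_le hy.1
  constructor
  · have hstretch : f a ≤ L * f (a / L) := by
      simpa [div_div_cancel₀ ha.ne', hL₀.ne'] using
        le_div_mul_of_antitoneOn_div hf.2 haL (div_le_self ha.le hL)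
    rw [div_le_iff₀' hL₀]
    exact hstretch.trans (mul_le_mul_of_nonneg_left (hf.1 haL hy₀ hy.1) hL₀.le)
  · have hstretch : f (L * a) ≤ L * f a := by
      simpa [ha.ne'] using le_div_mul_of_antitoneOn_div hf.2 ha (le_mul_of_one_le_left ha.le hL)
    exact (hf.1 hy₀ (mul_pos hL₀ ha) hy.2).trans hstretch

end ModeratelyIncreasing

lemma mem_Icc_of_mem_box {P : ℝ → ℝ → ℝ} (hsymm : ∀ x y, 0 < x → 0 < y → P x y = P y x)
    (hP : ∀ x, 0 < x → ModeratelyIncreasing (P x)) {L x₀ y₀ x y : ℝ} (hL : 1 ≤ L)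
    (hx₀ : 0 < x₀) (hy₀ : 0 < y₀) (hx : x ∈ Icc (x₀ / L) (L * x₀))
    (hy : y ∈ Icc (y₀ / L) (L * y₀)) : P x y ∈ Icc (P x₀ y₀ / L ^ 2) (L ^ 2 * P x₀ y₀) := by
  have hL₀ : 0 < L := one_pos.trans_le hL
  have hx_pos : 0 < x := (div_pos hx₀ hL₀).trans_le hx.1
  obtain ⟨hy_lo, hy_hi⟩ := (hP x hx_pos).mem_Icc_of_mem_Icc hL hy₀ hy
  obtain ⟨hx_lo, hx_hi⟩ := (hP y₀ hy₀).mem_Icc_of_mem_Icc hL hx₀ hx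
  rw [hsymm x y₀ hx_pos hy₀] at hy_lo hy_hi
  rw [hsymm x₀ y₀ hx₀ hy₀]
  constructor
  · calc P y₀ x₀ / L ^ 2 = P y₀ x₀ / L / L := by ring
      _ ≤ P y₀ x / L := by gcongr
      _ ≤ P x y := hy_lo
  · calc P x y ≤ L * P y₀ x := hy_hi
      _ ≤ L * (L * P y₀ x₀) := by gcongr
      _ = L ^ 2 * P y₀ x₀ := by ring

lemma Icc_div_mul_mem_nhds {L a : ℝ} (hL : 1 < L) (ha : 0 < a) : Icc (a / L) (L * a) ∈ 𝓝 a :=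
  Icc_mem_nhds (div_lt_self ha hL) (lt_mul_of_one_lt_left ha hL)

lemma tendsto_of_eventually_mem_Icc {α ι β : Type*} [TopologicalSpace β] [LinearOrder β]
    [OrderTopology β] {f : α → β} {g h : ι → β} {la : Filter α} {l : Filter ι} [l.NeBot] {c : β}
    (hg : Tendsto g l (𝓝 c)) (hh : Tendsto h l (𝓝 c))
    (H : ∀ᶠ i in l, ∀ᶠ x in la, f x ∈ Icc (g i) (h i)) : Tendsto f la (𝓝 c) := by
  refine tendsto_order.2 ⟨fun a ha => ?_, fun b hb => ?_⟩
  · obtain ⟨i, hi, hfi⟩ := ((hg.eventually (lt_mem_nhds ha)).and H).exists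
    exact hfi.mono fun x hx => hi.trans_le hx.1
  · obtain ⟨i, hi, hfi⟩ := ((hh.eventually (gt_mem_nhds hb)).and H).exists
    exact hfi.mono fun x hx => hx.2.trans_lt hi

theorem stmt_1_general (P : ℝ → ℝ → ℝ)
    (hsymm : ∀ x y, 0 ≤ x → 0 ≤ y → P x y = P y x)
    (hmono : ∀ x, 0 < x → MonotoneOn (P x) (Set.Ioi 0))
    (hMI : ∀ x, 0 < x → AntitoneOn (fun y => P x y / y) (Set.Ioi 0)) :
    ContinuousOn (fun p : ℝ × ℝ => P p.1 p.2) (Set.Ioi 0 ×ˢ Set.Ioi 0) := by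
  rintro ⟨x₀, y₀⟩ ⟨hx₀, hy₀⟩
  refine ContinuousAt.continuousWithinAt ?_
  set c := P x₀ y₀
  have hlower : Tendsto (fun L : ℝ => c / L ^ 2) (𝓝[>] 1) (𝓝 c) := by
    have : ContinuousAt (fun L : ℝ => c / L ^ 2) 1 := by fun_prop (disch := norm_num)
    simpa using this.tendsto.mono_left nhdsWithin_le_nhds
  have hupper : Tendsto (fun L : ℝ => L ^ 2 * c) (𝓝[>] 1) (𝓝 c) := by
    have : ContinuousAt (fun L : ℝ => L ^ 2 * c) 1 := by fun_prop
    simpa using this.tendsto.mono_left nhdsWithin_le_nhds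
  refine tendsto_of_eventually_mem_Icc hlower hupper ?_
  filter_upwards [self_mem_nhdsWithin] with L (hL : 1 < L)
  filter_upwards [prod_mem_nhds (Icc_div_mul_mem_nhds hL hx₀) (Icc_div_mul_mem_nhds hL hy₀)]
    with q hq
  exact mem_Icc_of_mem_box (fun x y hx hy => hsymm x y hx.le hy.le)
    (fun x hx => ⟨hmono x hx, hMI x hx⟩) hL.le hx₀ hy₀ hq.1 hq.2

/-- A symmetric, moderately increasing function `P : [0,∞)×[0,∞) → [0,∞)`
is continuous on `(0,∞)×(0,∞)`. -/
theorem stmt_1 (P : ℝ → ℝ → ℝ)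
    (hnonneg : ∀ x y, 0 ≤ x → 0 ≤ y → 0 ≤ P x y)
    (hsymm : ∀ x y, 0 ≤ x → 0 ≤ y → P x y = P y x)
    (hmono : ∀ x, 0 < x → MonotoneOn (P x) (Set.Ioi 0))
    (hMI : ∀ x, 0 < x → AntitoneOn (fun y => P x y / y) (Set.Ioi 0)) :
    ContinuousOn (fun p : ℝ × ℝ => P p.1 p.2) (Set.Ioi 0 ×ˢ Set.Ioi 0) :=
  stmt_1_general P hsymm hmono hMI
end

section
/- Let X be a real inner product space, M : [0,∞)×[0,∞) → [0,∞) symmetric, MI, with M(s,t) > 0 whenever s·t > 0, and suppose the function ρ_M(x,y) = |x−y|/M(|x|,|y|) satisfies the triangle inequality on ℝ (i.e. for all real numbers, with points 0 excluded if M(0,0)=0). Then ρ_M satisfies the triangle inequality on X: for all x,y,z ∈ X (excluding 0 if M(0,0)=0), |x−y|/M(|x|,|y|) ≤ |x−z|/M(|x|,|z|) + |z−y|/M(|z|,|y|). -/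
private lemma div_mono_num {a b c : ℝ} (h : a ≤ b) (hc : 0 ≤ c) : a / c ≤ b / c := by
  rw [div_eq_mul_inv, div_eq_mul_inv]
  exact mul_le_mul_of_nonneg_right h (inv_nonneg.mpr hc)

private lemma div3_iff {w u v P Q R : ℝ} (hP : 0 < P) (hQ : 0 < Q) (hR : 0 < R) :
    w / P ≤ u / Q + v / R ↔ w * (Q * R) ≤ u * (P * R) + v * (P * Q) := by
  rw [div_add_div _ _ hQ.ne' hR.ne', div_le_div_iff₀ hP (mul_pos hQ hR)]
  constructor <;> intro h <;> nlinarith [h]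

private lemma aux_key (M : ℝ → ℝ → ℝ)
    (hpos : ∀ x y, 0 < x → 0 < y → 0 < M x y)
    (hsymm : ∀ x y, 0 ≤ x → 0 ≤ y → M x y = M y x)
    (hmono : ∀ x, 0 ≤ x → MonotoneOn (M x) (Set.Ici 0))
    (hMI : ∀ x, 0 < x → AntitoneOn (fun y => M x y / y) (Set.Ioi 0))
    (htri : ∀ a b c : ℝ, 0 < a → 0 < b → 0 < c →
      |a - b| / M a b ≤ |a - c| / M a c + |c - b| / M c b)
    (a b c u v w : ℝ) (ha : 0 < a) (hb : 0 < b) (hc : 0 < c)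
    (hu : 0 ≤ u) (hv : 0 ≤ v) (hw2 : w ≤ u + v) (hpt : c * w ≤ b * u + a * v)
    (hac : a ≤ c) :
    w / M a b ≤ u / M a c + v / M c b := by
  have hP : 0 < M a b := hpos a b ha hb
  have hQ : 0 < M a c := hpos a c ha hc
  have hR : 0 < M c b := hpos c b hc hb
  set P := M a b with hPdef
  set Q := M a c with hQdef
  set R := M c b with hRdef
  -- fact: a * R ≤ c * P  (MI in the first variable)
  have haR : a * R ≤ c * P := by
    have h1 := hMI b hb (Set.mem_Ioi.mpr ha) (Set.mem_Ioi.mpr hc) hac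
    simp only at h1
    -- M b c / c ≤ M b a / a
    have h2 : M b c * a ≤ M b a * c := by
      rw [div_le_div_iff₀ hc ha] at h1; linarith
    have e1 : M b c = R := by rw [hRdef, hsymm c b hc.le hb.le]
    have e2 : M b a = P := by rw [hPdef, hsymm a b ha.le hb.le]
    rw [e1, e2] at h2; linarith
  rw [div3_iff hP hQ hR]
  rcases le_or_gt (b * Q) (c * P) with hbQ | hbQ
  · -- Ptolemy route
    have key : c * (w * (Q * R)) ≤ c * (u * (P * R) + v * (P * Q)) := by
      nlinarith [mul_le_mul_of_nonneg_left hpt (mul_pos hQ hR).le,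
        mul_le_mul_of_nonneg_right hbQ (mul_nonneg hu hR.le),
        mul_le_mul_of_nonneg_right haR (mul_nonneg hv hQ.le)]
    exact le_of_mul_le_mul_left key hc
  · -- middle case a ≤ c < b, use real-line inequality
    have hcb : c < b := by
      by_contra hcontra
      push_neg at hcontra
      have h1 := hMI a ha (Set.mem_Ioi.mpr hb) (Set.mem_Ioi.mpr hc) hcontra
      simp only at h1
      rw [div_le_div_iff₀ hc hb] at h1
      linarith
    have hQleP : Q ≤ P := hmono a ha.le (Set.mem_Ici.mpr hc.le) (Set.mem_Ici.mpr hb.le) hcb.le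
    have hab : a < b := lt_of_le_of_lt hac hcb
    have htri' := htri a b c ha hb hc
    rw [abs_of_nonpos (by linarith : a - b ≤ 0), abs_of_nonpos (by linarith : a - c ≤ 0),
      abs_of_nonpos (by linarith : c - b ≤ 0), neg_sub, neg_sub, neg_sub] at htri'
    have hcleared : (b - a) * (Q * R) ≤ (c - a) * (P * R) + (b - c) * (P * Q) :=
      (div3_iff hP hQ hR).mp htri'
    have hbc' : 0 < b - c := by linarith
    have hfac : 0 < c * (b - c) * Q := by positivity
    refine le_of_mul_le_mul_left ?_ hfac
    have h1 : 0 ≤ Q * R * (b * Q - c * P) * c * (u + v - w) := by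
      have : 0 ≤ b * Q - c * P := by linarith
      have : 0 ≤ u + v - w := by linarith
      positivity
    have h2 : 0 ≤ Q * R * (c * (P - Q)) * (b * u + a * v - c * w) := by
      have : 0 ≤ P - Q := by linarith
      have : 0 ≤ b * u + a * v - c * w := by linarith
      positivity
    have h3 : 0 ≤ v * c * Q *
        ((c - a) * (P * R) + (b - c) * (P * Q) - (b - a) * (Q * R)) := by
      have : 0 ≤ (c - a) * (P * R) + (b - c) * (P * Q) - (b - a) * (Q * R) := by linarith
      positivity
    nlinarith [h1, h2, h3]

/-- Transfer of the triangle inequality for `ρ_M` from `ℝ` to any real inner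
product space, for `M` symmetric, moderately increasing and positive off the axes.
(If `M(0,0) = 0` the point `0` is excluded.) -/
theorem stmt_3 (X : Type*) [NormedAddCommGroup X] [InnerProductSpace ℝ X]
    (M : ℝ → ℝ → ℝ)
    (hnonneg : ∀ x y, 0 ≤ x → 0 ≤ y → 0 ≤ M x y)
    (hsymm : ∀ x y, 0 ≤ x → 0 ≤ y → M x y = M y x)
    (hpos : ∀ x y, 0 < x → 0 < y → 0 < M x y)
    (hmono : ∀ x, 0 ≤ x → MonotoneOn (M x) (Set.Ici 0))
    (hMI : ∀ x, 0 < x → AntitoneOn (fun y => M x y / y) (Set.Ioi 0))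
    (htriR : ∀ a b c : ℝ, (M 0 0 = 0 → a ≠ 0 ∧ b ≠ 0 ∧ c ≠ 0) →
      |a - b| / M |a| |b| ≤ |a - c| / M |a| |c| + |c - b| / M |c| |b|) :
    ∀ x y z : X, (M 0 0 = 0 → x ≠ 0 ∧ y ≠ 0 ∧ z ≠ 0) →
      ‖x - y‖ / M ‖x‖ ‖y‖ ≤ ‖x - z‖ / M ‖x‖ ‖z‖ + ‖z - y‖ / M ‖z‖ ‖y‖ := by
  intro x y z hexc
  rcases eq_or_ne x 0 with rfl | hx
  · -- x = 0
    have hM00 : M 0 0 ≠ 0 := fun h => (hexc h).1 rfl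
    have ht := htriR 0 ‖y‖ ‖z‖ (fun h => absurd h hM00)
    simp only [abs_zero, abs_norm, zero_sub, abs_neg] at ht
    simp only [zero_sub, norm_neg, norm_zero]
    have h1 : |‖z‖ - ‖y‖| ≤ ‖z - y‖ := abs_norm_sub_norm_le z y
    have h2 : |‖z‖ - ‖y‖| / M ‖z‖ ‖y‖ ≤ ‖z - y‖ / M ‖z‖ ‖y‖ :=
      div_mono_num h1 (hnonneg _ _ (norm_nonneg z) (norm_nonneg y))
    calc ‖y‖ / M 0 ‖y‖ ≤ ‖z‖ / M 0 ‖z‖ + |‖z‖ - ‖y‖| / M ‖z‖ ‖y‖ := ht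
      _ ≤ ‖z‖ / M 0 ‖z‖ + ‖z - y‖ / M ‖z‖ ‖y‖ := by linarith
  rcases eq_or_ne y 0 with rfl | hy
  · -- y = 0
    have hM00 : M 0 0 ≠ 0 := fun h => (hexc h).2.1 rfl
    have ht := htriR ‖x‖ 0 ‖z‖ (fun h => absurd h hM00)
    simp only [abs_zero, abs_norm, sub_zero] at ht
    simp only [sub_zero, norm_zero]
    have h1 : |‖x‖ - ‖z‖| ≤ ‖x - z‖ := abs_norm_sub_norm_le x z
    have h2 : |‖x‖ - ‖z‖| / M ‖x‖ ‖z‖ ≤ ‖x - z‖ / M ‖x‖ ‖z‖ :=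
      div_mono_num h1 (hnonneg _ _ (norm_nonneg x) (norm_nonneg z))
    calc ‖x‖ / M ‖x‖ 0 ≤ |‖x‖ - ‖z‖| / M ‖x‖ ‖z‖ + ‖z‖ / M ‖z‖ 0 := ht
      _ ≤ ‖x - z‖ / M ‖x‖ ‖z‖ + ‖z‖ / M ‖z‖ 0 := by linarith
  rcases eq_or_ne z 0 with rfl | hz
  · -- z = 0
    have hM00 : M 0 0 ≠ 0 := fun h => (hexc h).2.2 rfl
    have ht := htriR ‖x‖ (-‖y‖) 0 (fun h => absurd h hM00)
    simp only [abs_zero, abs_norm, abs_neg, sub_zero, zero_sub, neg_neg,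
      sub_neg_eq_add, zero_add] at ht
    have habs : |‖x‖ + ‖y‖| = ‖x‖ + ‖y‖ := abs_of_nonneg (by positivity)
    rw [habs] at ht
    simp only [sub_zero, zero_sub, norm_neg, norm_zero]
    have h1 : ‖x - y‖ ≤ ‖x‖ + ‖y‖ := norm_sub_le x y
    have h2 : ‖x - y‖ / M ‖x‖ ‖y‖ ≤ (‖x‖ + ‖y‖) / M ‖x‖ ‖y‖ :=
      div_mono_num h1 (hnonneg _ _ (norm_nonneg x) (norm_nonneg y))
    calc ‖x - y‖ / M ‖x‖ ‖y‖ ≤ (‖x‖ + ‖y‖) / M ‖x‖ ‖y‖ := h2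
      _ ≤ ‖x‖ / M ‖x‖ 0 + ‖y‖ / M 0 ‖y‖ := ht
  -- main case: all nonzero
  have ha : 0 < ‖x‖ := norm_pos_iff.mpr hx
  have hb : 0 < ‖y‖ := norm_pos_iff.mpr hy
  have hc : 0 < ‖z‖ := norm_pos_iff.mpr hz
  have htri : ∀ a b c : ℝ, 0 < a → 0 < b → 0 < c →
      |a - b| / M a b ≤ |a - c| / M a c + |c - b| / M c b := by
    intro a b c ha' hb' hc'
    have := htriR a b c (fun _ => ⟨ha'.ne', hb'.ne', hc'.ne'⟩)
    rwa [abs_of_pos ha', abs_of_pos hb', abs_of_pos hc'] at this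
  -- Ptolemy's inequality with the origin
  have hpt : ‖z‖ * ‖x - y‖ ≤ ‖y‖ * ‖x - z‖ + ‖x‖ * ‖z - y‖ := by
    have h := EuclideanGeometry.mul_dist_le_mul_dist_add_mul_dist x z y (0 : X)
    simp only [dist_eq_norm, sub_zero] at h
    linarith [h]
  have hw2 : ‖x - y‖ ≤ ‖x - z‖ + ‖z - y‖ := by
    have := dist_triangle x z y
    simpa [dist_eq_norm] using this
  rcases le_total ‖x‖ ‖z‖ with hac | hca
  · exact aux_key M hpos hsymm hmono hMI htri ‖x‖ ‖y‖ ‖z‖ ‖x - z‖ ‖z - y‖ ‖x - y‖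
      ha hb hc (norm_nonneg _) (norm_nonneg _) hw2 (by linarith) hac
  · rcases le_total ‖z‖ ‖y‖ with hcb | hbc
    · -- z smallest : both denominators on the right are smaller
      have hP : 0 < M ‖x‖ ‖y‖ := hpos _ _ ha hb
      have hQ : 0 < M ‖x‖ ‖z‖ := hpos _ _ ha hc
      have hR : 0 < M ‖z‖ ‖y‖ := hpos _ _ hc hb
      have hQleP : M ‖x‖ ‖z‖ ≤ M ‖x‖ ‖y‖ :=
        hmono ‖x‖ ha.le (Set.mem_Ici.mpr hc.le) (Set.mem_Ici.mpr hb.le) hcb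
      have hRleP : M ‖z‖ ‖y‖ ≤ M ‖x‖ ‖y‖ := by
        have := hmono ‖y‖ hb.le (Set.mem_Ici.mpr hc.le) (Set.mem_Ici.mpr ha.le) hca
        rwa [hsymm ‖y‖ ‖z‖ hb.le hc.le, hsymm ‖y‖ ‖x‖ hb.le ha.le] at this
      rw [div3_iff hP hQ hR]
      nlinarith [mul_le_mul_of_nonneg_right hQleP (mul_nonneg (norm_nonneg (x - z)) hR.le),
        mul_le_mul_of_nonneg_right hRleP (mul_nonneg (norm_nonneg (z - y)) hQ.le),
        mul_le_mul_of_nonneg_right hw2 (mul_nonneg hQ.le hR.le),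
        mul_pos hQ hR]
    · -- y ≤ z ≤ x : apply aux_key with x and y swapped
      have h := aux_key M hpos hsymm hmono hMI htri ‖y‖ ‖x‖ ‖z‖ ‖z - y‖ ‖x - z‖ ‖x - y‖
        hb ha hc (norm_nonneg _) (norm_nonneg _) (by linarith) (by linarith) hbc
      rw [hsymm ‖y‖ ‖x‖ hb.le ha.le, hsymm ‖y‖ ‖z‖ hb.le hc.le,
        hsymm ‖z‖ ‖x‖ hc.le ha.le] at h
      linarith
end

section
/- Let M : (0,∞)×(0,∞) → (0,∞) be symmetric, increasing in each variable, and 1-homogeneous. If the function g(s) := M(s,1)/L(s,1) is increasing on [1,∞), where L is the logarithmic mean, then ρ_M(x,y) = |x−y|/M(x,y) satisfies the triangle inequality for all 0 < y < z < x: (x−y)/M(x,y) ≤ (x−z)/M(x,z) + (z−y)/M(z,y). -/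
/-! Homogeneity reduces `(x - y) / M x y` to `f (x / y)` with `f u = (u - 1) / M u 1`, so the
triangle inequality is the multiplicative subadditivity `f (s t) ≤ f s + f t` for `s, t > 1`.
Writing `f u = log u / g u` with `g u = M u 1 / L u 1`, this follows from `log (s t) = log s + log t`
and `g s, g t ≤ g (s t)`. -/

open Real Set

lemma log_mul_div_le_of_monotoneOn {g : ℝ → ℝ} (hg : MonotoneOn g (Ioi 1))
    (hg_pos : ∀ u, 1 < u → 0 < g u) {s t : ℝ} (hs : 1 < s) (ht : 1 < t) :
    log (s * t) / g (s * t) ≤ log s / g s + log t / g t := by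
  have hst : 1 < s * t := one_lt_mul hs.le ht
  rw [log_mul (by positivity) (by positivity), add_div]
  gcongr
  · exact (log_pos hs).le
  · exact hg_pos s hs
  · exact hg hs hst (le_mul_of_one_le_right (by positivity) ht.le)
  · exact (log_pos ht).le
  · exact hg_pos t ht
  · exact hg ht hst (le_mul_of_one_le_left (by positivity) hs.le)

lemma sub_one_div_eq_log_div {s m : ℝ} (hs : 1 < s) (hm : m ≠ 0) :
    (s - 1) / m = log s / (m / ((s - 1) / log s)) := by
  have : log s ≠ 0 := (log_pos hs).ne'
  have : s - 1 ≠ 0 := by linarith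
  field_simp

lemma sub_one_div_mul_le_of_monotoneOn {M : ℝ → ℝ → ℝ} (hpos : ∀ u, 1 < u → 0 < M u 1)
    (hg : MonotoneOn (fun s => M s 1 / ((s - 1) / log s)) (Ioi 1)) {s t : ℝ}
    (hs : 1 < s) (ht : 1 < t) :
    (s * t - 1) / M (s * t) 1 ≤ (s - 1) / M s 1 + (t - 1) / M t 1 := by
  have hg_pos (u : ℝ) (hu : 1 < u) : 0 < M u 1 / ((u - 1) / log u) :=
    div_pos (hpos u hu) (div_pos (by linarith) (log_pos hu))
  rw [sub_one_div_eq_log_div hs (hpos s hs).ne', sub_one_div_eq_log_div ht (hpos t ht).ne',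
    sub_one_div_eq_log_div (one_lt_mul hs.le ht) (hpos _ (one_lt_mul hs.le ht)).ne']
  exact log_mul_div_le_of_monotoneOn hg hg_pos hs ht

lemma sub_div_eq_sub_one_div_of_homogeneous {M : ℝ → ℝ → ℝ}
    (hhom : ∀ t x y, 0 < t → 0 < x → 0 < y → M (t * x) (t * y) = t * M x y)
    {x y : ℝ} (hx : 0 < x) (hy : 0 < y) :
    (x - y) / M x y = (x / y - 1) / M (x / y) 1 := by
  have hM : M x y = y * M (x / y) 1 := by
    simpa [mul_div_cancel₀ _ hy.ne'] using hhom y (x / y) 1 hy (by positivity) one_pos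
  rw [hM, ← div_div, sub_div, div_self hy.ne']

theorem stmt_6_general (M : ℝ → ℝ → ℝ)
    (hpos : ∀ x y, 0 < x → 0 < y → 0 < M x y)
    (hhom : ∀ t x y, 0 < t → 0 < x → 0 < y → M (t * x) (t * y) = t * M x y)
    (hg : MonotoneOn (fun s => M s 1 / ((s - 1) / Real.log s)) (Set.Ioi 1)) :
    ∀ x y z, 0 < y → y < z → z < x →
      (x - y) / M x y ≤ (x - z) / M x z + (z - y) / M z y := by
  intro x y z hy hyz hzx
  have hz : 0 < z := hy.trans hyz
  have hx : 0 < x := hz.trans hzx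
  have hxy : x / y = x / z * (z / y) := by field_simp
  rw [sub_div_eq_sub_one_div_of_homogeneous hhom hx hy,
    sub_div_eq_sub_one_div_of_homogeneous hhom hx hz,
    sub_div_eq_sub_one_div_of_homogeneous hhom hz hy, hxy]
  exact sub_one_div_mul_le_of_monotoneOn (fun u hu => hpos u 1 (by linarith) one_pos) hg
    ((one_lt_div hz).mpr hzx) ((one_lt_div hy).mpr hyz)

/-- If `M` is symmetric, increasing, `1`-homogeneous and the ratio
`M(s,1)/L(s,1)` is increasing on `[1,∞)` (with `L` the logarithmic mean),
then `ρ_M` satisfies the triangle inequality for `0 < y < z < x`. -/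
theorem stmt_6 (M : ℝ → ℝ → ℝ)
    (hpos : ∀ x y, 0 < x → 0 < y → 0 < M x y)
    (hsymm : ∀ x y, 0 < x → 0 < y → M x y = M y x)
    (hmono : ∀ x, 0 < x → MonotoneOn (M x) (Set.Ioi 0))
    (hhom : ∀ t x y, 0 < t → 0 < x → 0 < y → M (t * x) (t * y) = t * M x y)
    (hg : MonotoneOn (fun s => M s 1 / ((s - 1) / Real.log s)) (Set.Ioi 1)) :
    ∀ x y z, 0 < y → y < z → z < x →
      (x - y) / M x y ≤ (x - z) / M x z + (z - y) / M z y :=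
  stmt_6_general M hpos hhom hg
end

section
/- For p ≥ 1/3 and x ≥ 1, the ratio A_p(x,1)/L(x,1) = ((x^p+1)/2)^{1/p} · (log x)/(x−1) is increasing in x (with value interpreted by continuity at x = 1). -/
/-!
On `x > 1` the logarithm of `A_p(x,1) / L(x,1)` is `log ((x^p + 1)/2) / p + log (log x) - log (x - 1)`,
with derivative `x^(p-1)/(x^p+1) + 1/(x log x) - 1/(x-1)`. The first term is `1/(x + x^(1-p))`,
which increases with `p`, so it suffices to take `p = 1/3`. Substituting `x = t³` and clearing
denominators, nonnegativity becomes `3t(t² + 1) log t ≤ (t + 1)(t³ - 1)` for `t ≥ 1`; after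
dividing by `3t(t² + 1)` the difference of the two sides vanishes at `1` and has derivative
`(t - 1)⁴ (t² + t + 1) / (3t² (t² + 1)²) ≥ 0`. At `x = 1` monotonicity follows from the limit
`A_p/L → 1`.
-/

open Real Set Filter Topology

lemma mul_log_le_of_one_le {t : ℝ} (ht : 1 ≤ t) :
    3 * t * (t ^ 2 + 1) * log t ≤ (t + 1) * (t ^ 3 - 1) := by
  set g : ℝ → ℝ := fun t ↦ (t + 1) * (t ^ 3 - 1) / (3 * t * (t ^ 2 + 1)) - log t
  have hderiv : ∀ s, 0 < s →
      HasDerivAt g ((s - 1) ^ 4 * (s ^ 2 + s + 1) / (3 * s ^ 2 * (s ^ 2 + 1) ^ 2)) s := by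
    intro s hs
    have hnum : HasDerivAt (fun t : ℝ ↦ (t + 1) * (t ^ 3 - 1)) (4 * s ^ 3 + 3 * s ^ 2 - 1) s :=
      (((hasDerivAt_id' s).add_const 1).mul ((hasDerivAt_pow 3 s).sub_const 1)).congr_deriv
        (by norm_num; ring)
    have hden : HasDerivAt (fun t : ℝ ↦ 3 * t * (t ^ 2 + 1)) (9 * s ^ 2 + 3) s :=
      (((hasDerivAt_id' s).const_mul 3).mul ((hasDerivAt_pow 2 s).add_const 1)).congr_deriv
        (by norm_num; ring)
    refine ((hnum.div hden (by positivity)).sub (hasDerivAt_log hs.ne')).congr_deriv ?_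
    field_simp
    ring
  have hmono : MonotoneOn g (Ici 1) := by
    refine monotoneOn_of_hasDerivWithinAt_nonneg (convex_Ici 1)
      (fun s hs ↦ (hderiv s (by linarith [mem_Ici.mp hs])).continuousAt.continuousWithinAt)
      (fun s hs ↦ (hderiv s ?_).hasDerivWithinAt) (fun s hs ↦ ?_) <;>
    · rw [interior_Ici, mem_Ioi] at hs
      have : 0 < s := by linarith
      positivity
  have hg : g 1 ≤ g t := hmono self_mem_Ici ht ht
  have h1 : g 1 = 0 := by norm_num [g]
  have ht0 : 0 < 3 * t * (t ^ 2 + 1) := by positivity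
  simp only [g, h1, sub_nonneg, le_div_iff₀ ht0] at hg
  linarith

lemma one_div_pow_three_sub_one_le {t : ℝ} (ht : 1 < t) :
    1 / (t ^ 3 - 1) ≤ 1 / (t ^ 3 + t ^ 2) + 1 / (t ^ 3 * log (t ^ 3)) := by
  have hlog : 0 < log t := log_pos ht
  have key := mul_log_le_of_one_le ht.le
  have h3 : 0 < t ^ 3 - 1 := by nlinarith
  rw [log_pow, div_add_div _ _ (by positivity) (by positivity), div_le_div_iff₀ h3 (by positivity)]
  push_cast
  nlinarith [mul_le_mul_of_nonneg_left key (sq_nonneg t)]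

lemma MonotoneOn.Ici_of_continuousWithinAt {β : Type*} [Preorder β] [TopologicalSpace β]
    [ClosedIicTopology β] {f : ℝ → β} {a : ℝ} (hf : MonotoneOn f (Ioi a))
    (ha : ContinuousWithinAt f (Ioi a) a) : MonotoneOn f (Ici a) := by
  intro x hx y hy hxy
  rcases (mem_Ici.mp hx).eq_or_lt with rfl | hax
  · rcases (mem_Ici.mp hy).eq_or_lt with rfl | hay
    · exact le_rfl
    refine le_of_tendsto ha ?_
    filter_upwards [self_mem_nhdsWithin, nhdsWithin_le_nhds (eventually_lt_nhds hay)]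
      with z hz hzy using hf hz hay hzy.le
  · exact hf hax (hax.trans_le hxy) hxy

noncomputable def powerMeanDivLogMean (p x : ℝ) : ℝ :=
  ((x ^ p + 1) / 2) ^ (1 / p) * log x / (x - 1)

noncomputable def logPowerMeanDivLogMean (p x : ℝ) : ℝ :=
  log ((x ^ p + 1) / 2) / p + log (log x) - log (x - 1)

lemma exp_logPowerMeanDivLogMean (p : ℝ) {x : ℝ} (hx : 1 < x) :
    exp (logPowerMeanDivLogMean p x) = powerMeanDivLogMean p x := by
  have hx0 : 0 < x := by linarith
  rw [logPowerMeanDivLogMean, div_eq_mul_one_div (log _), exp_sub, exp_add, exp_log (log_pos hx),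
    exp_log (by linarith), powerMeanDivLogMean,
    rpow_def_of_pos (by positivity : 0 < (x ^ p + 1) / 2)]

lemma hasDerivAt_logPowerMeanDivLogMean {p x : ℝ} (hp : p ≠ 0) (hx : 1 < x) :
    HasDerivAt (logPowerMeanDivLogMean p)
      (x ^ (p - 1) / (x ^ p + 1) + 1 / (x * log x) - 1 / (x - 1)) x := by
  have hx0 : 0 < x := by linarith
  have hmean : HasDerivAt (fun y : ℝ ↦ (y ^ p + 1) / 2) (p * x ^ (p - 1) / 2) x :=
    ((hasDerivAt_rpow_const (Or.inl hx0.ne')).add_const 1).div_const 2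
  have hloglog : HasDerivAt (fun y ↦ log (log y)) (x⁻¹ / log x) x :=
    (hasDerivAt_log hx0.ne').log (log_pos hx).ne'
  have hsub : HasDerivAt (fun y : ℝ ↦ log (y - 1)) (1 / (x - 1)) x :=
    ((hasDerivAt_id' x).sub_const 1).log (by linarith)
  refine (((hmean.log (by positivity)).div_const p).add hloglog |>.sub hsub).congr_deriv ?_
  field_simp

lemma deriv_logPowerMeanDivLogMean_nonneg {p x : ℝ} (hp : 1 / 3 ≤ p) (hx : 1 < x) :
    0 ≤ x ^ (p - 1) / (x ^ p + 1) + 1 / (x * log x) - 1 / (x - 1) := by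
  have hx0 : 0 < x := by linarith
  set t := x ^ (1 / 3 : ℝ)
  have ht : 1 < t := one_lt_rpow hx (by norm_num)
  have hxt : x = t ^ 3 := by
    rw [← rpow_natCast, ← rpow_mul hx0.le]; norm_num
  have hpow : x ^ (p - 1) / (x ^ p + 1) = 1 / (x + x ^ (1 - p)) := by
    rw [div_eq_div_iff (by positivity) (by positivity), mul_add, ← rpow_add_one hx0.ne',
      ← rpow_add hx0]
    norm_num
  have hmono : 1 / (x + t ^ 2) ≤ 1 / (x + x ^ (1 - p)) := by
    have : x ^ (1 - p) ≤ t ^ 2 := by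
      rw [← rpow_natCast, ← rpow_mul hx0.le]
      exact rpow_le_rpow_of_exponent_le hx.le (by push_cast; linarith)
    gcongr
  have := one_div_pow_three_sub_one_le ht
  rw [← hxt] at this
  linarith

lemma monotoneOn_powerMeanDivLogMean {p : ℝ} (hp : 1 / 3 ≤ p) :
    MonotoneOn (powerMeanDivLogMean p) (Ioi 1) := by
  have hderiv x (hx : x ∈ Ioi (1 : ℝ)) := hasDerivAt_logPowerMeanDivLogMean (by linarith) hx
  have hlog : MonotoneOn (logPowerMeanDivLogMean p) (Ioi 1) :=
    monotoneOn_of_hasDerivWithinAt_nonneg (convex_Ioi 1)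
      (fun x hx ↦ (hderiv x hx).continuousAt.continuousWithinAt)
      (fun x hx ↦ (hderiv x (interior_subset hx)).hasDerivWithinAt)
      (fun x hx ↦ deriv_logPowerMeanDivLogMean_nonneg hp (interior_subset hx))
  exact (exp_monotone.comp_monotoneOn hlog).congr fun x hx ↦ exp_logPowerMeanDivLogMean p hx

lemma tendsto_powerMeanDivLogMean_one (p : ℝ) :
    Tendsto (powerMeanDivLogMean p) (𝓝[≠] 1) (𝓝 1) := by
  have hmean : Tendsto (fun x : ℝ ↦ ((x ^ p + 1) / 2) ^ (1 / p)) (𝓝[≠] 1) (𝓝 1) := by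
    have hc : ContinuousAt (fun x : ℝ ↦ ((x ^ p + 1) / 2) ^ (1 / p)) 1 :=
      (((continuousAt_rpow_const 1 p (Or.inl one_ne_zero)).add continuousAt_const).div_const
        2).rpow_const (Or.inl (by norm_num))
    simpa using hc.tendsto.mono_left nhdsWithin_le_nhds
  have hlog : Tendsto (fun x ↦ log x / (x - 1)) (𝓝[≠] 1) (𝓝 1) := by
    simpa only [slope_fun_def_field, log_one, sub_zero, inv_one] using
      hasDerivAt_iff_tendsto_slope.mp (hasDerivAt_log one_ne_zero)
  unfold powerMeanDivLogMean
  simpa only [one_mul, ← mul_div_assoc] using hmean.mul hlog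

/-- For `p ≥ 1/3` the ratio `A_p(x,1)/L(x,1)` is increasing in `x ≥ 1`
(with value `1` at `x = 1`, by continuity). -/
theorem stmt_7 (p : ℝ) (hp : 1/3 ≤ p) :
    MonotoneOn (fun x : ℝ =>
      if x = 1 then 1 else ((x ^ p + 1) / 2) ^ (1/p) * Real.log x / (x - 1))
      (Set.Ici 1) := by
  refine MonotoneOn.Ici_of_continuousWithinAt
    ((monotoneOn_powerMeanDivLogMean hp).congr fun x hx ↦ (if_neg hx.ne').symm) ?_
  rw [ContinuousWithinAt, if_pos rfl]
  refine ((tendsto_powerMeanDivLogMean_one p).mono_left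
    (nhdsWithin_mono _ fun x hx ↦ ne_of_gt hx)).congr' ?_
  filter_upwards [self_mem_nhdsWithin] with x hx using (if_neg (ne_of_gt hx)).symm
end

section
/- For all y ≥ 1, the inequality 3·log y ≤ (y³−1)(1+1/y)/(y²+1) holds. -/
open Real Set

private noncomputable def f8 : ℝ → ℝ :=
  fun x => (x ^ 3 - 1) * (1 + 1 / x) / (x ^ 2 + 1) - 3 * Real.log x

private lemma f8_deriv {x : ℝ} (hx : 0 < x) :
    HasDerivAt f8 ((x - 1) ^ 4 * (x ^ 2 + x + 1) / (x ^ 2 * (x ^ 2 + 1) ^ 2)) x := by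
  have hx0 : x ≠ 0 := ne_of_gt hx
  have hden : x ^ 2 + 1 ≠ 0 := by positivity
  have h1 : HasDerivAt (fun x : ℝ => x ^ 3 - 1) (3 * x ^ 2) x := by
    simpa using ((hasDerivAt_pow 3 x).sub_const 1)
  have h2 : HasDerivAt (fun x : ℝ => 1 + 1 / x) (-(1 / x ^ 2)) x := by
    simpa [one_div] using (hasDerivAt_inv hx0).const_add 1
  have hnum := h1.mul h2
  have hden' : HasDerivAt (fun x : ℝ => x ^ 2 + 1) (2 * x) x := by
    simpa using ((hasDerivAt_pow 2 x).add_const 1)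
  have hq := hnum.div hden' hden
  have hlog : HasDerivAt (fun x : ℝ => 3 * Real.log x) (3 * x⁻¹) x :=
    (Real.hasDerivAt_log hx0).const_mul 3
  have := hq.sub hlog
  convert this using 1
  · rfl
  · rfl
  · rfl
  simp only [Pi.mul_apply]
  field_simp
  ring

/-- For all `y ≥ 1`, `3·log y ≤ (y³−1)(1+1/y)/(y²+1)`. -/
theorem stmt_8 (y : ℝ) (hy : 1 ≤ y) :
    3 * Real.log y ≤ (y ^ 3 - 1) * (1 + 1 / y) / (y ^ 2 + 1) := by
  have mono : MonotoneOn f8 (Set.Ici 1) := by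
    apply monotoneOn_of_deriv_nonneg (convex_Ici 1)
    · exact fun x hx => ((f8_deriv (lt_of_lt_of_le one_pos hx)).continuousAt).continuousWithinAt
    · intro x hx
      rw [interior_Ici] at hx
      exact ((f8_deriv (lt_trans one_pos hx)).differentiableAt).differentiableWithinAt
    · intro x hx
      rw [interior_Ici] at hx
      have hx0 : 0 < x := lt_trans one_pos hx
      rw [(f8_deriv hx0).deriv]
      positivity
  have h1 : f8 1 = 0 := by simp [f8]
  have h := mono (by simp : (1:ℝ) ∈ Set.Ici 1) (by exact hy) hy
  rw [h1] at h
  have : 0 ≤ (y ^ 3 - 1) * (1 + 1 / y) / (y ^ 2 + 1) - 3 * Real.log y := h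
  linarith
end

section
/- Let 0 < q < 1 and p ≥ max{1−q, (2−q)/3}. Then for all x ≥ 1, q(x^p + x^{1−q})(x−1) ≤ (x − x^{1−q})(x^p + 1). -/
open Real Nat

lemma sinh_sum_nonneg (w1 w2 w3 a b c t : ℝ) (ht : 0 ≤ t)
    (h : ∀ n : ℕ, Odd n → 0 ≤ w1 * a ^ n + w2 * b ^ n + w3 * c ^ n) :
    0 ≤ w1 * (Real.exp (a*t) - Real.exp (-(a*t))) + w2 * (Real.exp (b*t) - Real.exp (-(b*t)))
      + w3 * (Real.exp (c*t) - Real.exp (-(c*t))) := by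
  have hexp : ∀ y : ℝ, Real.exp y = ∑' n : ℕ, y ^ n / n ! := by
    intro y
    rw [Real.exp_eq_exp_ℝ, NormedSpace.exp_eq_tsum_div]
  have hsum : ∀ y : ℝ, Summable (fun n : ℕ => y ^ n / n !) := fun y =>
    Real.summable_pow_div_factorial y
  have pair : ∀ u : ℝ, Real.exp (u*t) - Real.exp (-(u*t))
      = ∑' n : ℕ, ((u*t) ^ n - (-(u*t)) ^ n) / n ! := by
    intro u
    rw [hexp, hexp, ← Summable.tsum_sub (hsum _) (hsum _)]
    congr 1; funext n; rw [sub_div]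
  have hs1 : ∀ u w : ℝ, Summable (fun n : ℕ => w * (((u*t) ^ n - (-(u*t)) ^ n) / n !)) :=
    fun u w => (((hsum (u*t)).sub (hsum (-(u*t)))).congr (fun n => (sub_div _ _ _).symm)).mul_left w
  rw [pair, pair, pair, ← tsum_mul_left, ← tsum_mul_left, ← tsum_mul_left,
    ← Summable.tsum_add (hs1 a w1) (hs1 b w2), ← Summable.tsum_add ((hs1 a w1).add (hs1 b w2)) (hs1 c w3)]
  apply tsum_nonneg
  intro n
  rcases Nat.even_or_odd n with he | ho
  · simp [he.neg_pow]
  · have h1 := h n ho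
    rw [ho.neg_pow, ho.neg_pow, ho.neg_pow, mul_pow a t, mul_pow b t, mul_pow c t]
    have htn : 0 ≤ t ^ n := pow_nonneg ht n
    have key : w1 * ((a^n*t^n - -(a^n*t^n))/(n ! : ℝ)) + w2 * ((b^n*t^n - -(b^n*t^n))/(n ! : ℝ))
        + w3 * ((c^n*t^n - -(c^n*t^n))/(n ! : ℝ))
        = 2 * ((w1*a^n + w2*b^n + w3*c^n) * t^n) / (n ! : ℝ) := by ring
    rw [key]
    have : (0:ℝ) < n ! := by positivity
    apply div_nonneg _ this.le
    nlinarith [mul_nonneg h1 htn]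

lemma lemE (k : ℕ) (m : ℝ) (h0 : 0 ≤ m) (h1 : m ≤ 1) :
    0 ≤ (1-m)*(3+m)^(2*k+1) - (1+m)*(3-m)^(2*k+1) + 2^(2*k+2)*m^(2*k+1) := by
  induction k with
  | zero =>
    have : (1-m)*(3+m)^(2*0+1) - (1+m)*(3-m)^(2*0+1) + 2^(2*0+2)*m^(2*0+1) = 0 := by ring
    linarith
  | succ k ih =>
    have hXY : (3-m)^(2*k) ≤ (3+m)^(2*k) := pow_le_pow_left₀ (by linarith) (by linarith) _
    have hY : (0:ℝ) ≤ (3-m)^(2*k) := pow_nonneg (by linarith) _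
    have p1 : ∀ x : ℝ, x^(2*(k+1)+1) = x^(2*k)*x^3 := fun x => by
      rw [show 2*(k+1)+1 = 2*k+3 from by omega, pow_add]
    have p2 : ∀ x : ℝ, x^(2*(k+1)+2) = x^(2*k)*x^4 := fun x => by
      rw [show 2*(k+1)+2 = 2*k+4 from by omega, pow_add]
    have p3 : ∀ x : ℝ, x^(2*k+1) = x^(2*k)*x := fun x => pow_succ x _
    have p4 : ∀ x : ℝ, x^(2*k+2) = x^(2*k)*x^2 := fun x => by rw [pow_add]
    rw [p1, p1, p2, p1]
    rw [p3, p3, p4, p3] at ih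
    set X := (3+m)^(2*k) with hX
    set Y := (3-m)^(2*k) with hYd
    set P := (2:ℝ)^(2*k) with hP
    set M := m^(2*k) with hM
    have key : (1-m)*(X*(3+m)^3) - (1+m)*(Y*(3-m)^3) + P*2^4*(M*m^3)
        = 4*m^2*((1-m)*(X*(3+m)) - (1+m)*(Y*(3-m)) + P*2^2*(M*m))
          + 3*(1-m^2)*(3+m)*(3-m)*(X - Y) := by ring
    rw [key]
    have t1 : 0 ≤ 4*m^2*((1-m)*(X*(3+m)) - (1+m)*(Y*(3-m)) + P*2^2*(M*m)) :=
      mul_nonneg (by positivity) ih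
    have t2 : 0 ≤ 3*(1-m^2)*(3+m)*(3-m)*(X - Y) := by
      have h2 : 0 ≤ 1 - m^2 := by nlinarith
      have h3 : (0:ℝ) ≤ 3+m := by linarith
      have h4 : (0:ℝ) ≤ 3-m := by linarith
      have h5 : 0 ≤ X - Y := by linarith
      positivity
    linarith

lemma coeff_nonneg (q : ℝ) (hq0 : 0 < q) (hq1 : q < 1) (n : ℕ) (hn : Odd n) :
    0 ≤ (1-q) * ((max (1-q) ((2-q)/3) + q)/2) ^ n + q * ((max (1-q) ((2-q)/3) + q - 2)/2) ^ n
      + ((q - max (1-q) ((2-q)/3))/2) ^ n := by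
  obtain ⟨k, rfl⟩ := hn
  have hodd : Odd (2*k+1) := ⟨k, rfl⟩
  rcases le_or_gt q (1/2) with h | h
  · rw [max_eq_left (by linarith)]
    have e1 : ((1 - q + q)/2 : ℝ) = 1/2 := by ring
    have e2 : ((1 - q + q - 2)/2 : ℝ) = -(1/2) := by ring
    have e3 : ((q - (1-q))/2 : ℝ) = -((1-2*q)/2) := by ring
    rw [e1, e2, e3, Odd.neg_pow hodd, Odd.neg_pow hodd]
    have hd : (0:ℝ) < (1/2:ℝ) ^ (2*k+1) := by positivity
    have he : ((1-2*q)/2 : ℝ) ^ (2*k+1) ≤ (1-2*q) * (1/2)^(2*k+1) := by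
      have h9 : ((1-2*q)/2 : ℝ) ^ (2*k+1) = (1-2*q)^(2*k+1) * (1/2)^(2*k+1) := by
        rw [← mul_pow]; ring_nf
      rw [h9]
      apply mul_le_mul_of_nonneg_right _ hd.le
      calc (1-2*q)^(2*k+1) ≤ (1-2*q)^1 := by
            apply pow_le_pow_of_le_one (by linarith) (by linarith); omega
        _ = 1-2*q := pow_one _
    nlinarith [he, hd]
  · rw [max_eq_right (by linarith)]
    set m : ℝ := 2*q - 1 with hm
    have hm0 : 0 ≤ m := by rw [hm]; linarith
    have hm1 : m ≤ 1 := by rw [hm]; linarith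
    have hE := lemE k m hm0 hm1
    have e1 : (((2-q)/3 + q)/2 : ℝ) = (3+m)/6 := by rw [hm]; ring
    have e2 : (((2-q)/3 + q - 2)/2 : ℝ) = -((3-m)/6) := by rw [hm]; ring
    have e3 : ((q - (2-q)/3)/2 : ℝ) = 2*m/6 := by rw [hm]; ring
    have hq' : (1-q : ℝ) = (1-m)/2 := by rw [hm]; ring
    have hq'' : (q : ℝ) = (1+m)/2 := by rw [hm]; ring
    have r1 : ∀ u : ℝ, (u/6)^(2*k+1) = u^(2*k+1)/6^(2*k+1) := fun u => div_pow u 6 _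
    have r2 : ((2*m:ℝ))^(2*k+1) = 2^(2*k+1)*m^(2*k+1) := mul_pow 2 m _
    have r3 : (2:ℝ)^(2*k+2) = 2^(2*k+1)*2 := pow_succ 2 _
    have goal_eq : (1-q) * (((3+m)/6):ℝ)^(2*k+1) + q * (-((3-m)/6))^(2*k+1) + (2*m/6)^(2*k+1)
        = ((1-m)*(3+m)^(2*k+1) - (1+m)*(3-m)^(2*k+1) + 2^(2*k+2)*m^(2*k+1)) / (2*6^(2*k+1)) := by
      rw [Odd.neg_pow hodd, hq', hq'', r1, r1, r1, r2, r3]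
      have h6 : (0:ℝ) < 6^(2*k+1) := by positivity
      field_simp
      ring
    rw [e1, e2, e3, goal_eq]
    exact div_nonneg hE (by positivity)

lemma main_exp (p q t : ℝ) (hq0 : 0 < q) (hq1 : q < 1)
    (hp : max (1 - q) ((2 - q) / 3) ≤ p) (ht : 0 ≤ t) :
    q * (Real.exp (t*p) + Real.exp (t*(1-q))) * (Real.exp t - 1)
      ≤ (Real.exp t - Real.exp (t*(1-q))) * (Real.exp (t*p) + 1) := by
  set P : ℝ := max (1 - q) ((2 - q) / 3) with hP
  have hP1 : 1 - q ≤ P := le_max_left _ _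
  have hD : 0 ≤ (1-q) * (Real.exp (((P+q)/2)*t) - Real.exp (-(((P+q)/2)*t)))
      + q * (Real.exp (((P+q-2)/2)*t) - Real.exp (-(((P+q-2)/2)*t)))
      + 1 * (Real.exp (((q-P)/2)*t) - Real.exp (-(((q-P)/2)*t))) := by
    apply sinh_sum_nonneg _ _ _ _ _ _ _ ht
    intro n hn
    have := coeff_nonneg q hq0 hq1 n hn
    rw [← hP] at this
    linarith
  -- product-to-sum facts
  have G1 : Real.exp (t*((P+2-q)/2)) * Real.exp (((P+q)/2)*t) = Real.exp (t*(P+1)) := by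
    rw [← Real.exp_add]; congr 1; ring
  have G2 : Real.exp (t*((P+2-q)/2)) * Real.exp (-(((P+q)/2)*t)) = Real.exp (t*(1-q)) := by
    rw [← Real.exp_add]; congr 1; ring
  have G3 : Real.exp (t*((P+2-q)/2)) * Real.exp (((P+q-2)/2)*t) = Real.exp (t*P) := by
    rw [← Real.exp_add]; congr 1; ring
  have G4 : Real.exp (t*((P+2-q)/2)) * Real.exp (-(((P+q-2)/2)*t)) = Real.exp (t*(2-q)) := by
    rw [← Real.exp_add]; congr 1; ring
  have G5 : Real.exp (t*((P+2-q)/2)) * Real.exp (((q-P)/2)*t) = Real.exp t := by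
    rw [← Real.exp_add]; congr 1; ring
  have G6 : Real.exp (t*((P+2-q)/2)) * Real.exp (-(((q-P)/2)*t)) = Real.exp (t*(P+1-q)) := by
    rw [← Real.exp_add]; congr 1; ring
  have F1 : Real.exp t * Real.exp (t*P) = Real.exp (t*(P+1)) := by
    rw [← Real.exp_add]; congr 1; ring
  have F2 : Real.exp (t*(1-q)) * Real.exp (t*P) = Real.exp (t*(P+1-q)) := by
    rw [← Real.exp_add]; congr 1; ring
  have F3 : Real.exp (t*(1-q)) * Real.exp t = Real.exp (t*(2-q)) := by
    rw [← Real.exp_add]; congr 1; ring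
  have hkey : Real.exp (t*((P+2-q)/2)) *
      ((1-q) * (Real.exp (((P+q)/2)*t) - Real.exp (-(((P+q)/2)*t)))
      + q * (Real.exp (((P+q-2)/2)*t) - Real.exp (-(((P+q-2)/2)*t)))
      + 1 * (Real.exp (((q-P)/2)*t) - Real.exp (-(((q-P)/2)*t))))
      = (Real.exp t - Real.exp (t*(1-q))) * (Real.exp (t*P) + 1)
        - q * (Real.exp (t*P) + Real.exp (t*(1-q))) * (Real.exp t - 1) := by
    linear_combination (1-q)*G1 - (1-q)*G2 + q*G3 - q*G4 + G5 - G6 - (1-q)*F1 + F2 + q*F3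
  -- main inequality at exponent P
  have mainP : q * (Real.exp (t*P) + Real.exp (t*(1-q))) * (Real.exp t - 1)
      ≤ (Real.exp t - Real.exp (t*(1-q))) * (Real.exp (t*P) + 1) := by
    nlinarith [mul_nonneg (Real.exp_pos (t*((P+2-q)/2))).le hD, hkey]
  -- p-reduction
  have hf : Real.exp (t*(1-q)) ≤ (1-q) * Real.exp t + q := by
    have hc := convexOn_exp.2 (Set.mem_univ t) (Set.mem_univ (0:ℝ))
      (by linarith : (0:ℝ) ≤ 1 - q) hq0.le (by ring)
    simp only [smul_eq_mul, mul_zero, add_zero, Real.exp_zero, mul_one] at hc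
    rw [mul_comm]
    exact hc
  have hmono : Real.exp (t*P) ≤ Real.exp (t*p) := by
    apply Real.exp_le_exp.2
    exact mul_le_mul_of_nonneg_left hp ht
  have h1 : 0 ≤ (Real.exp (t*p) - Real.exp (t*P)) * ((1-q)*Real.exp t + q - Real.exp (t*(1-q))) :=
    mul_nonneg (by linarith) (by linarith)
  nlinarith [mainP, h1]

/-- For `0 < q < 1` and `p ≥ max{1−q, (2−q)/3}`, the key inequality
`q(x^p + x^{1−q})(x−1) ≤ (x − x^{1−q})(x^p + 1)` holds for all `x ≥ 1`. -/
theorem stmt_10 (p q : ℝ) (hq0 : 0 < q) (hq1 : q < 1)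
    (hp : max (1 - q) ((2 - q) / 3) ≤ p) :
    ∀ x : ℝ, 1 ≤ x →
      q * (x ^ p + x ^ (1 - q)) * (x - 1) ≤ (x - x ^ (1 - q)) * (x ^ p + 1) := by
  intro x hx
  have hx0 : (0:ℝ) < x := lt_of_lt_of_le one_pos hx
  obtain ⟨t, ht, rfl⟩ : ∃ t, 0 ≤ t ∧ x = Real.exp t :=
    ⟨Real.log x, Real.log_nonneg hx, (Real.exp_log hx0).symm⟩
  rw [← Real.exp_mul, ← Real.exp_mul]
  exact main_exp p q t hq0 hq1 hp ht
end

section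
/- Let 0 < q < 1. If p < max{1−q, (2−q)/3}, then the inequality q(x^p + x^{1−q})(x−1) ≤ (x − x^{1−q})(x^p + 1) fails for some x > 1. -/
open Real

lemma stmt11_exp_lb {t : ℝ} (h0 : 0 ≤ t) (h1 : t ≤ 1) :
    1 + t + t^2/2 + t^3/6 + t^4/24 + t^5/120 - 7*t^6/4320 ≤ exp t := by
  have hb := Real.exp_bound (n := 6) (by rw [abs_of_nonneg h0]; exact h1) (by norm_num)
  rw [abs_of_nonneg h0] at hb
  have h2 := (abs_sub_le_iff.1 hb).2
  simp [Finset.sum_range_succ, Nat.factorial] at h2 ⊢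
  nlinarith [h2]

lemma stmt11_exp_ub {t : ℝ} (h0 : 0 ≤ t) (h1 : t ≤ 1) :
    exp t ≤ 1 + t + t^2/2 + t^3/6 + t^4/24 + t^5/120 + 7*t^6/4320 := by
  have hb := Real.exp_bound (n := 6) (by rw [abs_of_nonneg h0]; exact h1) (by norm_num)
  rw [abs_of_nonneg h0] at hb
  have h2 := (abs_sub_le_iff.1 hb).1
  simp [Finset.sum_range_succ, Nat.factorial] at h2 ⊢
  nlinarith [h2]

lemma stmt11_expneg_lb {t : ℝ} (h0 : 0 ≤ t) (h1 : t ≤ 1) :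
    1 - t + t^2/2 - t^3/6 + t^4/24 - t^5/120 - 7*t^6/4320 ≤ exp (-t) := by
  have hb := Real.exp_bound (x := -t) (n := 6) (by rw [abs_neg, abs_of_nonneg h0]; exact h1)
    (by norm_num)
  rw [abs_neg, abs_of_nonneg h0] at hb
  have h2 := (abs_sub_le_iff.1 hb).2
  simp [Finset.sum_range_succ, Nat.factorial] at h2 ⊢
  nlinarith [h2]

lemma stmt11_expneg_ub {t : ℝ} (h0 : 0 ≤ t) (h1 : t ≤ 1) :
    exp (-t) ≤ 1 - t + t^2/2 - t^3/6 + t^4/24 - t^5/120 + 7*t^6/4320 := by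
  have hb := Real.exp_bound (x := -t) (n := 6) (by rw [abs_neg, abs_of_nonneg h0]; exact h1)
    (by norm_num)
  rw [abs_neg, abs_of_nonneg h0] at hb
  have h2 := (abs_sub_le_iff.1 hb).1
  simp [Finset.sum_range_succ, Nat.factorial] at h2 ⊢
  nlinarith [h2]

lemma stmt11_sinh_lb {t : ℝ} (h0 : 0 ≤ t) (h1 : t ≤ 1) : t + t^3/6 ≤ sinh t := by
  rw [Real.sinh_eq]
  have a := stmt11_exp_lb h0 h1
  have b := stmt11_expneg_ub h0 h1
  nlinarith [pow_le_one₀ h0 h1 (n := 5), pow_le_one₀ h0 h1 (n := 6), pow_nonneg h0 5,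
    pow_nonneg h0 6]

lemma stmt11_sinh_ub {t : ℝ} (h0 : 0 ≤ t) (h1 : t ≤ 1) : sinh t ≤ t + t^3/6 + t^5/20 := by
  rw [Real.sinh_eq]
  have a := stmt11_exp_ub h0 h1
  have b := stmt11_expneg_lb h0 h1
  nlinarith [pow_le_one₀ h0 h1 (n := 6), pow_nonneg h0 5, pow_nonneg h0 6]

lemma stmt11_cosh_lb {t : ℝ} (h0 : 0 ≤ t) (h1 : t ≤ 1) : 1 + t^2/2 ≤ cosh t := by
  rw [Real.cosh_eq]
  have a := stmt11_exp_lb h0 h1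
  have b := stmt11_expneg_lb h0 h1
  nlinarith [pow_le_one₀ h0 h1 (n := 6), pow_nonneg h0 4, pow_nonneg h0 6]

lemma stmt11_cosh_ub {t : ℝ} (h0 : 0 ≤ t) (h1 : t ≤ 1) : cosh t ≤ 1 + t^2/2 + t^4/12 := by
  rw [Real.cosh_eq]
  have a := stmt11_exp_ub h0 h1
  have b := stmt11_expneg_ub h0 h1
  nlinarith [pow_le_one₀ h0 h1 (n := 6), pow_nonneg h0 4, pow_nonneg h0 6]


lemma stmt11_key_ineq (p q s : ℝ) (hq0 : 0 < q) (hq1 : q < 1) (hpl : 1 - q ≤ p)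
    (hpu : 3 * p < 2 - q) (hs0 : 0 < s) (hs1 : s ≤ 1)
    (hs2 : s^2 ≤ q * ((1 - q) * (2 - q - 3*p) / 3) / 4) :
    sinh (q*s) * cosh (p*s) < q * sinh s * cosh ((p+q-1)*s) := by
  set b := p + q - 1 with hb
  have hp0 : 0 < p := by linarith
  have hp1 : p < 1 := by linarith
  have hb0 : 0 ≤ b := by rw [hb]; linarith
  have hb1 : b ≤ 1 := by rw [hb]; linarith
  have hqs0 : 0 ≤ q * s := by positivity
  have hqs1 : q * s ≤ 1 := by nlinarith
  have hps0 : 0 ≤ p * s := by positivity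
  have hps1 : p * s ≤ 1 := by nlinarith
  have hbs0 : 0 ≤ b * s := by positivity
  have hbs1 : b * s ≤ 1 := by nlinarith
  have h1 := stmt11_sinh_lb hs0.le hs1
  have h2 := stmt11_cosh_lb hbs0 hbs1
  have h3 := stmt11_sinh_ub hqs0 hqs1
  have h4 := stmt11_cosh_ub hps0 hps1
  have h5 : 0 ≤ sinh (q*s) := le_trans (by positivity) (stmt11_sinh_lb hqs0 hqs1)
  have h6 : 0 < cosh (p*s) := Real.cosh_pos _
  have hU : sinh (q*s) * cosh (p*s) ≤
      (q*s + (q*s)^3/6 + (q*s)^5/20) * (1 + (p*s)^2/2 + (p*s)^4/12) := by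
    apply mul_le_mul h3 h4 h6.le (by positivity)
  have hL : q * ((s + s^3/6) * (1 + (b*s)^2/2)) ≤ q * (sinh s * cosh (b*s)) := by
    apply mul_le_mul_of_nonneg_left _ hq0.le
    apply mul_le_mul h1 h2 (by positivity) (by nlinarith)
  rw [mul_assoc]
  refine lt_of_le_of_lt hU (lt_of_lt_of_le ?_ hL)
  set c := (1 - q) * (2 - q - 3*p) / 3 with hc
  have hc0 : 0 < c := by
    have : 0 < 2 - q - 3*p := by linarith
    rw [hc]; exact div_pos (mul_pos (by linarith) this) (by norm_num)
  have hq2 : q^2 ≤ 1 := pow_le_one₀ hq0.le hq1.le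
  have hp2 : p^2 ≤ 1 := pow_le_one₀ hp0.le hp1.le
  have hq4 : q^4 ≤ 1 := pow_le_one₀ hq0.le hq1.le
  have hp4 : p^4 ≤ 1 := pow_le_one₀ hp0.le hp1.le
  have hss : s^2 ≤ 1 := pow_le_one₀ hs0.le hs1
  have hs4 : s^4 ≤ 1 := pow_le_one₀ hs0.le hs1
  have hqs5 : (0:ℝ) ≤ q * s^5 := by positivity
  have A1 : q^2*p^4*s^2 ≤ 1 :=
    mul_le_one₀ (mul_le_one₀ hq2 (by positivity) hp4) (by positivity) hss
  have A2 : q^2*p^2 ≤ 1 := mul_le_one₀ hq2 (by positivity) hp2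
  have A3 : q^4*p^2*s^2 ≤ 1 :=
    mul_le_one₀ (mul_le_one₀ hq4 (by positivity) hp2) (by positivity) hss
  have A4 : q^4*p^4*s^4 ≤ 1 :=
    mul_le_one₀ (mul_le_one₀ hq4 (by positivity) hp4) (by positivity) hs4
  have sA : (q*s + (q*s)^3/6 + (q*s)^5/20) * (1 + (p*s)^2/2 + (p*s)^4/12) ≤
      q*s + q*s^3*(q^2/6 + p^2/2) + q*s^5 := by
    linarith [hqs5, mul_nonneg hqs5 (sub_nonneg.2 hp4), mul_nonneg hqs5 (sub_nonneg.2 A2),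
      mul_nonneg hqs5 (sub_nonneg.2 hq4), mul_nonneg hqs5 (sub_nonneg.2 A1),
      mul_nonneg hqs5 (sub_nonneg.2 A3), mul_nonneg hqs5 (sub_nonneg.2 A4)]
  have expand : q*((s + s^3/6) * (1 + (b*s)^2/2)) =
      q*s + q*s^3*(q^2/6 + p^2/2) + q*s^3*c + q*b^2*s^5/12 := by
    rw [hc, hb]; ring
  have h7 : q * s^5 ≤ q * s^3 * (q*c/4) := by
    have e : s^5 = s^3 * s^2 := by ring
    rw [e, mul_comm (s^3) (s^2), ← mul_assoc]
    have := mul_le_mul_of_nonneg_left hs2 (by positivity : (0:ℝ) ≤ q)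
    calc q * s^2 * s^3 ≤ q * (q*c/4) * s^3 := by
          apply mul_le_mul_of_nonneg_right _ (by positivity)
          exact mul_le_mul_of_nonneg_left (by rw [hc] at hs2 ⊢; exact hs2) hq0.le
      _ = q * s^3 * (q*c/4) := by ring
  have h8 : q * s^3 * (q*c/4) < q * s^3 * c := by
    apply mul_lt_mul_of_pos_left _ (by positivity)
    linarith [mul_pos hc0 (by linarith : (0:ℝ) < 4 - q)]
  have h9 : (0:ℝ) ≤ q*b^2*s^5/12 := by positivity
  linarith

/-- For `0 < q < 1` and `p < max{1−q, (2−q)/3}`, the key inequality fails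
for some `x > 1`. -/
theorem stmt_11 (p q : ℝ) (hq0 : 0 < q) (hq1 : q < 1)
    (hp : p < max (1 - q) ((2 - q) / 3)) :
    ∃ x : ℝ, 1 < x ∧
      ¬ q * (x ^ p + x ^ (1 - q)) * (x - 1) ≤ (x - x ^ (1 - q)) * (x ^ p + 1) := by
  rcases lt_or_ge p (1 - q) with h1 | h1
  · -- Case 1 : p < 1 - q, inequality fails for large x
    set p' := max p 0 with hp'
    have hp'q : p' < 1 - q := max_lt h1 (by linarith)
    set δ := 1 - q - p' with hδ
    have hd : 0 < δ := by rw [hδ]; linarith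
    set x := max 2 ((4/q) ^ (1/δ)) + 1 with hxdef
    have hx2 : 2 ≤ x := by
      have := le_max_left 2 ((4/q) ^ (1/δ)); rw [hxdef]; linarith
    have hx1 : 1 < x := by linarith
    have hx0 : 0 < x := by linarith
    have hxgt : (4/q) ^ (1/δ) < x := by
      have := le_max_right 2 ((4/q) ^ (1/δ)); rw [hxdef]; linarith
    refine ⟨x, hx1, ?_⟩
    rw [not_le]
    have hA : 0 < x ^ p' := rpow_pos_of_pos hx0 _
    have hxp' : x ^ p ≤ x ^ p' := rpow_le_rpow_of_exponent_le hx1.le (le_max_left _ _)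
    have hone : 1 ≤ x ^ p' := by
      rw [show (1:ℝ) = x ^ (0:ℝ) from (rpow_zero x).symm]
      exact rpow_le_rpow_of_exponent_le hx1.le (le_max_right _ _)
    have hRHS : (x - x ^ (1-q)) * (x ^ p + 1) ≤ x * (2 * x ^ p') := by
      apply mul_le_mul
      · have : 0 ≤ x ^ (1-q) := (rpow_pos_of_pos hx0 _).le
        linarith
      · linarith
      · positivity
      · exact hx0.le
    have hsplit : x ^ (1-q) = x ^ p' * x ^ δ := by
      rw [← rpow_add hx0, hδ]; ring_nf
    have hxd : 4 < q * x ^ δ := by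
      have h40 : (0:ℝ) < 4/q := by positivity
      have e : ((4/q) ^ (1/δ)) ^ δ = 4/q := by
        rw [← Real.rpow_mul h40.le, one_div, inv_mul_cancel₀ hd.ne', Real.rpow_one]
      have hxd' : 4/q < x ^ δ := by
        calc 4/q = ((4/q) ^ (1/δ)) ^ δ := e.symm
          _ < x ^ δ := Real.rpow_lt_rpow (Real.rpow_nonneg h40.le _) hxgt hd
      have := (div_lt_iff₀ hq0).1 hxd'
      linarith
    have hD : 0 < x ^ δ := rpow_pos_of_pos hx0 _
    have hmain : x * (2 * x ^ p') < q * (x ^ (1-q) * (x - 1)) := by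
      rw [hsplit]
      nlinarith [mul_pos (mul_pos hA hx0) (show (0:ℝ) < q * x ^ δ - 4 by linarith),
        mul_nonneg (mul_nonneg (mul_nonneg hq0.le hD.le) hA.le)
          (show (0:ℝ) ≤ x - 2 by linarith)]
    have hLHS : q * (x ^ (1-q) * (x - 1)) ≤ q * (x ^ p + x ^ (1-q)) * (x - 1) := by
      have hxp0 : 0 ≤ x ^ p := (rpow_pos_of_pos hx0 _).le
      have : x ^ (1-q) * (x-1) ≤ (x ^ p + x ^ (1-q)) * (x-1) := by
        apply mul_le_mul_of_nonneg_right (by linarith) (by linarith)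
      calc q * (x ^ (1-q) * (x - 1)) ≤ q * ((x ^ p + x ^ (1-q)) * (x - 1)) :=
            mul_le_mul_of_nonneg_left this hq0.le
        _ = q * (x ^ p + x ^ (1-q)) * (x - 1) := by ring
    linarith
  · -- Case 2 : 1 - q ≤ p < (2-q)/3, inequality fails near x = 1
    have h2 : p < (2 - q) / 3 := by
      by_contra h
      push_neg at h
      have : max (1 - q) ((2 - q) / 3) ≤ p := max_le h1 h
      linarith
    have hpu : 3 * p < 2 - q := by linarith
    set c := (1 - q) * (2 - q - 3*p) / 3 with hc
    have hc0 : 0 < c := by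
      rw [hc]
      exact div_pos (mul_pos (by linarith) (by linarith)) (by norm_num)
    set s := min 1 (Real.sqrt (q * c) / 2) with hs
    have hs0 : 0 < s := by
      rw [hs]
      exact lt_min one_pos (by positivity)
    have hs1 : s ≤ 1 := min_le_left _ _
    have hs2 : s ^ 2 ≤ q * c / 4 := by
      have h1' : s ≤ Real.sqrt (q * c) / 2 := min_le_right _ _
      have h2' : s ^ 2 ≤ (Real.sqrt (q * c) / 2) ^ 2 := by
        apply pow_le_pow_left₀ hs0.le h1'
      have : (Real.sqrt (q * c) / 2) ^ 2 = q * c / 4 := by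
        rw [div_pow, Real.sq_sqrt (by positivity)]
        norm_num
      linarith
    set x := Real.exp (2 * s) with hx
    have hx1 : 1 < x := by
      calc (1:ℝ) = Real.exp 0 := Real.exp_zero.symm
        _ < Real.exp (2 * s) := Real.exp_lt_exp.2 (by linarith)
    refine ⟨x, hx1, ?_⟩
    rw [not_le]
    set u := Real.exp (p * s) with hu
    set v := Real.exp ((1 - q) * s) with hv
    set w := Real.exp s with hw
    have hu0 : 0 < u := Real.exp_pos _
    have hv0 : 0 < v := Real.exp_pos _
    have hw0 : 0 < w := Real.exp_pos _
    have hxw : x = w ^ 2 := by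
      rw [hx, hw, sq, ← Real.exp_add]; ring_nf
    have hxp : x ^ p = u ^ 2 := by
      rw [hx, Real.rpow_def_of_pos (Real.exp_pos _), Real.log_exp, hu, sq, ← Real.exp_add]
      ring_nf
    have hxq : x ^ (1 - q) = v ^ 2 := by
      rw [hx, Real.rpow_def_of_pos (Real.exp_pos _), Real.log_exp, hv, sq, ← Real.exp_add]
      ring_nf
    rw [hxp, hxq, hxw]
    have hsinh : Real.sinh s = (w - w⁻¹) / 2 := by rw [Real.sinh_eq, Real.exp_neg, hw]
    have hcoshb : Real.cosh ((p + q - 1) * s) = (u/v + (u/v)⁻¹) / 2 := by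
      rw [Real.cosh_eq, Real.exp_neg, show (p + q - 1) * s = p * s - (1 - q) * s from by ring,
        Real.exp_sub, hu, hv]
    have hsinhq : Real.sinh (q * s) = (w/v - (w/v)⁻¹) / 2 := by
      rw [Real.sinh_eq, Real.exp_neg, show q * s = s - (1 - q) * s from by ring,
        Real.exp_sub, hw, hv]
    have hcoshp : Real.cosh (p * s) = (u + u⁻¹) / 2 := by rw [Real.cosh_eq, Real.exp_neg, hu]
    have hkey := stmt11_key_ineq p q s hq0 hq1 h1 hpu hs0 hs1 (by rw [← hc]; linarith)
    rw [hsinh, hcoshb, hsinhq, hcoshp] at hkey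
    have hid : q * ((u^2 + v^2) * (w^2 - 1)) - (w^2 - v^2) * (u^2 + 1) =
        4 * (u * v * w) * (q * ((w - w⁻¹)/2) * ((u/v + (u/v)⁻¹)/2)
          - ((w/v - (w/v)⁻¹)/2) * ((u + u⁻¹)/2)) := by
      field_simp
      ring
    have pos := mul_pos (show (0:ℝ) < 4 * (u * v * w) by positivity)
      (show (0:ℝ) < q * ((w - w⁻¹)/2) * ((u/v + (u/v)⁻¹)/2)
          - ((w/v - (w/v)⁻¹)/2) * ((u + u⁻¹)/2) from by linarith)
    rw [mul_sub] at pos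
    linarith [hid, pos]
end

section
/- The function ρ_{p,q}(x,y) = |x−y| / A_p(|x|,|y|)^q with q > 1 and p > 0 fails the triangle inequality on ℝ: there exist x,y,z ∈ ℝ with |x−y|/A_p(|x|,|y|)^q > |x−z|/A_p(|x|,|z|)^q + |z−y|/A_p(|z|,|y|)^q. -/
/-!
Take `x = 1`, `y = 0` and let `z → ∞`. Then `ρ(1, 0) = 2 ^ (q / p)`, while bounding the power
mean `A_p(|a|, |z|)` below by `A_p(0, |z|) = 2 ^ (-1 / p) |z|` shows that both `ρ(1, z)` and
`ρ(z, 0)` are at most `2 ^ (q / p) z ^ (1 - q)`, which tends to `0` since `q > 1`.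
-/

open Filter

noncomputable def rho (p q x y : ℝ) : ℝ :=
  |x - y| / ((|x| ^ p + |y| ^ p) / 2) ^ (q / p)

lemma rho_comm (p q x y : ℝ) : rho p q x y = rho p q y x := by
  rw [rho, rho, abs_sub_comm, add_comm]

lemma rho_one_zero {p : ℝ} (hp : p ≠ 0) (q : ℝ) : rho p q 1 0 = 2 ^ (q / p) := by
  rw [rho, sub_zero, abs_one, abs_zero, Real.one_rpow, Real.zero_rpow hp, add_zero,
    one_div, one_div, Real.inv_rpow zero_le_two, inv_inv]

lemma rho_le {p q : ℝ} (hp : 0 < p) (hq : 0 ≤ q) (x : ℝ) {z : ℝ} (hz : z ≠ 0) :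
    rho p q x z ≤ 2 ^ (q / p) * |x - z| / |z| ^ q := by
  have hz' : 0 < |z| := abs_pos.mpr hz
  have hmean : |z| ^ q / 2 ^ (q / p) ≤ ((|x| ^ p + |z| ^ p) / 2) ^ (q / p) := by
    calc |z| ^ q / 2 ^ (q / p) = (|z| ^ p / 2) ^ (q / p) := by
          rw [Real.div_rpow (by positivity) zero_le_two, ← Real.rpow_mul hz'.le,
            mul_div_cancel₀ q hp.ne']
      _ ≤ ((|x| ^ p + |z| ^ p) / 2) ^ (q / p) := by
          gcongr
          exact le_add_of_nonneg_left (by positivity)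
  calc rho p q x z ≤ |x - z| / (|z| ^ q / 2 ^ (q / p)) :=
        div_le_div_of_nonneg_left (abs_nonneg _) (by positivity) hmean
    _ = 2 ^ (q / p) * |x - z| / |z| ^ q := by rw [div_div_eq_mul_div, mul_comm]

lemma exists_one_le_and_two_mul_lt_rpow {q : ℝ} (hq : 1 < q) :
    ∃ z : ℝ, 1 ≤ z ∧ 2 * z < z ^ q := by
  obtain ⟨z, hz1, hz2⟩ := ((tendsto_rpow_atTop (sub_pos.mpr hq)).eventually_gt_atTop 2).and
    (eventually_ge_atTop 1) |>.exists
  refine ⟨z, hz2, ?_⟩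
  calc 2 * z < z ^ (q - 1) * z := by gcongr
    _ = z ^ q := by rw [← Real.rpow_add_one (by linarith), sub_add_cancel]

/-- For `q > 1` and `p > 0`, `ρ_{p,q}` fails the triangle inequality on `ℝ`. -/
theorem stmt_13 (p q : ℝ) (hp : 0 < p) (hq : 1 < q) :
    ∃ x y z : ℝ,
      |x - z| / ((|x| ^ p + |z| ^ p) / 2) ^ (q / p)
        + |z - y| / ((|z| ^ p + |y| ^ p) / 2) ^ (q / p)
      < |x - y| / ((|x| ^ p + |y| ^ p) / 2) ^ (q / p) := by
  obtain ⟨z, hz1, hz⟩ := exists_one_le_and_two_mul_lt_rpow hq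
  have hz0 : z ≠ 0 := by positivity
  have habs : |z| = z := abs_of_nonneg (by linarith)
  have hdist : |1 - z| ≤ z := by rw [abs_sub_comm, abs_of_nonneg (by linarith)]; linarith
  refine ⟨1, 0, z, ?_⟩
  change rho p q 1 z + rho p q z 0 < rho p q 1 0
  calc rho p q 1 z + rho p q z 0
        ≤ 2 ^ (q / p) * |1 - z| / |z| ^ q + 2 ^ (q / p) * |0 - z| / |z| ^ q := by
        rw [rho_comm p q z 0]
        exact add_le_add (rho_le hp (by linarith) 1 hz0) (rho_le hp (by linarith) 0 hz0)
    _ ≤ 2 ^ (q / p) * (2 * z) / z ^ q := by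
        rw [zero_sub, abs_neg, habs, ← add_div, ← mul_add, two_mul]
        gcongr
    _ < 2 ^ (q / p) := by
        rw [div_lt_iff₀ (by positivity)]
        exact mul_lt_mul_of_pos_left hz (by positivity)
    _ = rho p q 1 0 := (rho_one_zero hp.ne' q).symm
end

section
/- Let 0 < q ≤ 1 and p ≥ max{1−q, (2−q)/3}. Then ρ_{p,q}(x,y) = |x−y| / A_p(|x|,|y|)^q is a metric on ℝⁿ (with ρ_{p,q}(0,0) := 0 when needed). -/
/-!
Write `a, b, c` for `‖x‖, ‖y‖, ‖z‖`, `u, v, w` for `‖x - y‖, ‖x - z‖, ‖z - y‖` and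
`F(s, t) = A_p(s, t) ^ q`. Besides `u ≤ v + w`, the only input from the geometry is Ptolemy's
inequality `c u ≤ b v + a w`, so `u / F(a, b) ≤ v / F(a, c) + w / F(c, b)` follows as soon as
`1 / F(a, b) ≤ λ + c μ`, `λ + b μ ≤ 1 / F(a, c)` and `λ + a μ ≤ 1 / F(c, b)` for some `λ, μ ≥ 0`.
For `a ≤ b` such weights exist: if `c ≤ a` by monotonicity of `F`; if `b ≤ c` because
`r ↦ r / F(r, s)` increases (this is where `q ≤ 1` enters); and if `a ≤ c ≤ b` the condition is
exactly the triangle inequality for the three points `a ≤ c ≤ b` of the half-line.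

On the half-line the inequality holds because the `b`-derivative of `(b - a) / F(a, b)` increases
in `a ∈ [0, b]`. The `a`-derivative of that derivative has the sign of
`b^(2p-1) - a^(2p-1) + (p + q - 1) (b - a) (ab)^(p-1)`, which is nonnegative for `p ≥ 1/2` since
`p + q ≥ 1`, and for `p < 1/2` since `p + q - 1 ≥ 1 - 2p` and `sinh (k t) ≤ k sinh t` for
`k = 1 - 2p ∈ [0, 1]`.
-/

open Real Set

lemma Real.convexOn_sinh : ConvexOn ℝ (Ici 0) sinh := by
  refine MonotoneOn.convexOn_of_deriv (convex_Ici 0) continuous_sinh.continuousOn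
    differentiable_sinh.differentiableOn ?_
  rw [deriv_sinh, interior_Ici]
  exact cosh_strictMonoOn.monotoneOn.mono Ioi_subset_Ici_self

lemma Real.sinh_mul_le_mul_sinh {c x : ℝ} (hc0 : 0 ≤ c) (hc1 : c ≤ 1) (hx : 0 ≤ x) :
    sinh (c * x) ≤ c * sinh x := by
  simpa using convexOn_sinh.2 self_mem_Ici (show x ∈ Ici 0 from hx) (sub_nonneg.2 hc1) hc0
    (by ring)

lemma rpow_neg_sub_rpow_neg_le {c a b : ℝ} (hc0 : 0 ≤ c) (hc1 : c ≤ 1) (ha : 0 < a)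
    (hab : a ≤ b) : a ^ (-c) - b ^ (-c) ≤ c * (b - a) * (a * b) ^ (-(1 + c) / 2) := by
  have hb : 0 < b := ha.trans_le hab
  obtain ⟨m, d, hd, rfl, rfl⟩ : ∃ m d, 0 ≤ d ∧ a = exp (m - d) ∧ b = exp (m + d) :=
    ⟨(log a + log b) / 2, (log b - log a) / 2, by linarith [log_le_log ha hab],
      by ring_nf; rw [exp_log ha], by ring_nf; rw [exp_log hb]⟩
  have key := mul_le_mul_of_nonneg_left (sinh_mul_le_mul_sinh hc0 hc1 hd)
    (mul_nonneg zero_le_two (exp_pos (-(c * m))).le)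
  rw [sinh_eq, sinh_eq] at key
  rw [← exp_add, rpow_def_of_pos (exp_pos _), rpow_def_of_pos (exp_pos _),
    rpow_def_of_pos (exp_pos _), log_exp, log_exp, log_exp]
  have e1 : exp ((m - d) * -c) = exp (-(c * m)) * exp (c * d) := by rw [← exp_add]; ring_nf
  have e2 : exp ((m + d) * -c) = exp (-(c * m)) * exp (-(c * d)) := by rw [← exp_add]; ring_nf
  have e3 : exp (m + d) * exp ((m - d + (m + d)) * (-(1 + c) / 2)) =
      exp (-(c * m)) * exp d := by
    rw [← exp_add, ← exp_add]; ring_nf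
  have e4 : exp (m - d) * exp ((m - d + (m + d)) * (-(1 + c) / 2)) =
      exp (-(c * m)) * exp (-d) := by
    rw [← exp_add, ← exp_add]; ring_nf
  linear_combination key + e1 - e2 - c * e3 + c * e4

section RelativeDistance

variable {p q : ℝ}

/-- `(b - a) / A_p(a, b) ^ q`, written with a negative exponent so that it differentiates as a
product. -/
noncomputable def rayDist (p q a b : ℝ) : ℝ := (b - a) * ((a ^ p + b ^ p) / 2) ^ (-(q / p))

noncomputable def rayDistDeriv (p q a b : ℝ) : ℝ :=
  (1 - q * b ^ (p - 1) * (b - a) / (a ^ p + b ^ p)) * ((a ^ p + b ^ p) / 2) ^ (-(q / p))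

lemma hasDerivAt_rayDist (hp : 0 < p) {a b : ℝ} (ha : 0 ≤ a) (hb : 0 < b) :
    HasDerivAt (rayDist p q a) (rayDistDeriv p q a b) b := by
  have hS : 0 < a ^ p + b ^ p := by positivity
  have hG := (((hasDerivAt_rpow_const (p := p) (Or.inl hb.ne')).const_add (a ^ p)).div_const
    2).rpow_const (p := -(q / p)) (Or.inl (by positivity))
  refine (((hasDerivAt_id b).sub_const a).mul hG).congr_deriv ?_
  rw [show -(q / p) - 1 = -(q / p) + -1 by ring, rpow_add (by positivity), rpow_neg_one,
    rayDistDeriv, id_eq]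
  field_simp
  ring

lemma hasDerivAt_rayDistDeriv_left (hp : 0 < p) {a b : ℝ} (ha : 0 < a) (hb : 0 < b) :
    HasDerivAt (fun x => rayDistDeriv p q x b)
      (((a ^ p + b ^ p) / 2) ^ (-(q / p)) * q / (a ^ p + b ^ p) ^ 2 *
        ((a ^ p + b ^ p) * (b ^ (p - 1) - a ^ (p - 1)) +
          (p + q) * (b - a) * (a ^ (p - 1) * b ^ (p - 1)))) a := by
  have hS : 0 < a ^ p + b ^ p := by positivity
  have hSa : HasDerivAt (fun x => x ^ p + b ^ p) (p * a ^ (p - 1)) a :=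
    (hasDerivAt_rpow_const (Or.inl ha.ne')).add_const _
  have hN : HasDerivAt (fun x => 1 - q * b ^ (p - 1) * (b - x) / (x ^ p + b ^ p))
      (-((q * b ^ (p - 1) * -1 * (a ^ p + b ^ p) - q * b ^ (p - 1) * (b - a) * (p * a ^ (p - 1)))
        / (a ^ p + b ^ p) ^ 2)) a :=
    ((((hasDerivAt_id a).const_sub b).const_mul (q * b ^ (p - 1))).div hSa hS.ne').const_sub 1
  have hG := (hSa.div_const 2).rpow_const (p := -(q / p)) (Or.inl (by positivity))
  refine (hN.mul hG).congr_deriv ?_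
  rw [show -(q / p) - 1 = -(q / p) + -1 by ring, rpow_add (by positivity), rpow_neg_one]
  field_simp
  ring

lemma rayDistDeriv_numerator_nonneg (hp : 0 ≤ p) (hpq : 1 ≤ p + q) (h3 : 2 ≤ 3 * p + q)
    {a b : ℝ} (ha : 0 < a) (hab : a ≤ b) :
    0 ≤ (a ^ p + b ^ p) * (b ^ (p - 1) - a ^ (p - 1)) +
      (p + q) * (b - a) * (a ^ (p - 1) * b ^ (p - 1)) := by
  have hb : 0 < b := ha.trans_le hab
  have hpow (x : ℝ) (hx : 0 < x) :
      x ^ p = x ^ (p - 1) * x ∧ x ^ (2 * p - 1) = x ^ (p - 1) * x ^ p :=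
    ⟨by rw [← rpow_add_one hx.ne']; ring_nf, by rw [← rpow_add hx]; ring_nf⟩
  obtain ⟨ha1, ha2⟩ := hpow a ha
  obtain ⟨hb1, hb2⟩ := hpow b hb
  have hsplit : (a ^ p + b ^ p) * (b ^ (p - 1) - a ^ (p - 1)) +
      (p + q) * (b - a) * (a ^ (p - 1) * b ^ (p - 1)) =
      b ^ (2 * p - 1) - a ^ (2 * p - 1) + (p + q - 1) * ((b - a) * (a * b) ^ (p - 1)) := by
    rw [mul_rpow ha.le hb.le, ha2, hb2, ha1, hb1]; ring
  have hmixed : 0 ≤ (b - a) * (a * b) ^ (p - 1) :=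
    mul_nonneg (sub_nonneg.2 hab) (rpow_nonneg (mul_pos ha hb).le _)
  rw [hsplit]
  rcases le_or_gt (1 / 2) p with hp2 | hp2
  · have : a ^ (2 * p - 1) ≤ b ^ (2 * p - 1) := rpow_le_rpow ha.le hab (by linarith)
    nlinarith
  · have key := rpow_neg_sub_rpow_neg_le (c := 1 - 2 * p) (by linarith) (by linarith) ha hab
    rw [show -(1 - 2 * p) = 2 * p - 1 by ring, show -(1 + (1 - 2 * p)) / 2 = p - 1 by ring] at key
    nlinarith

lemma monotoneOn_rayDistDeriv_left (hp : 0 < p) (hq : 0 ≤ q) (hpq : 1 ≤ p + q)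
    (h3 : 2 ≤ 3 * p + q) {b : ℝ} (hb : 0 < b) :
    MonotoneOn (fun a => rayDistDeriv p q a b) (Icc 0 b) := by
  have hS : ∀ a ∈ Icc 0 b, 0 < a ^ p + b ^ p := fun a ha => by
    have := rpow_nonneg ha.1 p; positivity
  have hcont : ContinuousOn (fun a => a ^ p + b ^ p) (Icc 0 b) :=
    ((continuous_rpow_const hp.le).add continuous_const).continuousOn
  refine monotoneOn_of_deriv_nonneg (convex_Icc 0 b) ?_ ?_ ?_
  · refine (continuousOn_const.sub ((by fun_prop : Continuous fun a =>
      q * b ^ (p - 1) * (b - a)).continuousOn.div hcont fun a ha => (hS a ha).ne')).mul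
      ((hcont.div_const 2).rpow_const fun a ha => Or.inl ?_)
    have := hS a ha; positivity
  · rw [interior_Icc]
    exact fun a ha =>
      (hasDerivAt_rayDistDeriv_left hp ha.1 hb).differentiableAt.differentiableWithinAt
  · rw [interior_Icc]
    intro a ha
    rw [(hasDerivAt_rayDistDeriv_left hp ha.1 hb).deriv]
    have := hS a (Ioo_subset_Icc_self ha)
    exact mul_nonneg (div_nonneg (mul_nonneg (by positivity) hq) (by positivity))
      (rayDistDeriv_numerator_nonneg hp.le hpq h3 ha.1 ha.2.le)

lemma continuousOn_rayDist (hp : 0 < p) {a c : ℝ} (ha : 0 ≤ a) (hc : 0 < c) :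
    ContinuousOn (rayDist p q a) (Ici c) := by
  refine (continuous_id.sub continuous_const).continuousOn.mul
    ((((continuous_rpow_const hp.le).const_add _).continuousOn.div_const 2).rpow_const
      fun x hx => Or.inl ?_)
  have := rpow_pos_of_pos (hc.trans_le hx) p
  have := rpow_nonneg ha p
  positivity

lemma rayDist_le_add (hp : 0 < p) (hq : 0 ≤ q) (hpq : 1 ≤ p + q) (h3 : 2 ≤ 3 * p + q)
    {a b c : ℝ} (ha : 0 ≤ a) (hac : a ≤ c) (hc : 0 < c) (hcb : c ≤ b) :
    rayDist p q a b ≤ rayDist p q a c + rayDist p q c b := by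
  suffices MonotoneOn (fun x => rayDist p q c x - rayDist p q a x) (Ici c) by
    have := this self_mem_Ici hcb hcb
    simp only [rayDist, sub_self, zero_mul, zero_sub] at this ⊢
    linarith
  have hderiv : ∀ x ∈ interior (Ici c), HasDerivAt (fun x => rayDist p q c x - rayDist p q a x)
      (rayDistDeriv p q c x - rayDistDeriv p q a x) x := fun x hx => by
    rw [interior_Ici] at hx
    exact (hasDerivAt_rayDist hp hc.le (hc.trans hx)).sub (hasDerivAt_rayDist hp ha (hc.trans hx))
  refine monotoneOn_of_deriv_nonneg (convex_Ici c)
    ((continuousOn_rayDist hp hc.le hc).sub (continuousOn_rayDist hp ha hc))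
    (fun x hx => (hderiv x hx).differentiableAt.differentiableWithinAt) fun x hx => ?_
  rw [(hderiv x hx).deriv, sub_nonneg]
  rw [interior_Ici] at hx
  exact monotoneOn_rayDistDeriv_left hp hq hpq h3 (hc.trans hx) ⟨ha, hac.trans hx.le⟩
    ⟨hc.le, hx.le⟩ hac

/-- `A_p(a, b) ^ q`. -/
noncomputable def powerMeanPow (p q a b : ℝ) : ℝ := ((a ^ p + b ^ p) / 2) ^ (q / p)

lemma powerMeanPow_comm (a b : ℝ) : powerMeanPow p q a b = powerMeanPow p q b a := by
  rw [powerMeanPow, powerMeanPow, add_comm]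

lemma powerMeanPow_nonneg {a b : ℝ} (ha : 0 ≤ a) (hb : 0 ≤ b) : 0 ≤ powerMeanPow p q a b := by
  have := rpow_nonneg ha p
  have := rpow_nonneg hb p
  exact rpow_nonneg (by positivity) _

lemma powerMeanPow_pos {a b : ℝ} (ha : 0 ≤ a) (hb : 0 ≤ b) (hab : 0 < a + b) :
    0 < powerMeanPow p q a b := by
  have : 0 < a ^ p + b ^ p := by
    rcases ha.eq_or_lt with rfl | ha'
    · have := rpow_pos_of_pos (by linarith : 0 < b) p
      positivity
    · have := rpow_pos_of_pos ha' p
      have := rpow_nonneg hb p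
      positivity
  exact rpow_pos_of_pos (by positivity) _

lemma powerMeanPow_le_powerMeanPow_right (hp : 0 < p) (hq : 0 ≤ q) {a b b' : ℝ} (ha : 0 ≤ a)
    (hb : 0 ≤ b) (hbb' : b ≤ b') : powerMeanPow p q a b ≤ powerMeanPow p q a b' := by
  have := rpow_nonneg ha p
  have := rpow_nonneg hb p
  have := rpow_le_rpow hb hbb' hp.le
  exact rpow_le_rpow (by positivity) (by linarith) (by positivity)

lemma powerMeanPow_le_powerMeanPow_left (hp : 0 < p) (hq : 0 ≤ q) {a a' b : ℝ} (ha : 0 ≤ a)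
    (hb : 0 ≤ b) (haa' : a ≤ a') : powerMeanPow p q a b ≤ powerMeanPow p q a' b := by
  rw [powerMeanPow_comm a, powerMeanPow_comm a']
  exact powerMeanPow_le_powerMeanPow_right hp hq hb ha haa'

lemma powerMeanPow_le_mul_rpow (hp : 0 < p) (hq : 0 ≤ q) {r r' s : ℝ} (hr : 0 < r)
    (hrr' : r ≤ r') (hs : 0 ≤ s) :
    powerMeanPow p q r' s ≤ (r' / r) ^ q * powerMeanPow p q r s := by
  have hr'0 : 0 < r' := hr.trans_le hrr'
  have hqp : 0 ≤ q / p := div_nonneg hq hp.le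
  have hk : 1 ≤ (r' / r) ^ p := one_le_rpow ((one_le_div hr).2 hrr') hp.le
  have hr' : r' ^ p = (r' / r) ^ p * r ^ p := by
    rw [← mul_rpow (by positivity) hr.le, div_mul_cancel₀ _ hr.ne']
  have := rpow_nonneg hr.le p
  have := rpow_nonneg hs p
  calc powerMeanPow p q r' s ≤ ((r' / r) ^ p * ((r ^ p + s ^ p) / 2)) ^ (q / p) := by
        refine rpow_le_rpow (by positivity) ?_ hqp
        rw [hr']
        nlinarith
    _ = (r' / r) ^ q * powerMeanPow p q r s := by
        rw [mul_rpow (by positivity) (by positivity), ← rpow_mul (by positivity),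
          mul_div_cancel₀ _ hp.ne', powerMeanPow]

lemma monotoneOn_div_powerMeanPow (hp : 0 < p) (hq : 0 ≤ q) (hq1 : q ≤ 1) {s : ℝ}
    (hs : 0 ≤ s) : MonotoneOn (fun r => r / powerMeanPow p q r s) (Ici 0) := by
  intro r hr r' hr' hrr'
  rcases (mem_Ici.1 hr).eq_or_lt with rfl | hr
  · simpa using div_nonneg hr' (powerMeanPow_nonneg hr' hs)
  have hF := powerMeanPow_pos (q := q) (p := p) hr.le hs (by linarith)
  have hF' := powerMeanPow_pos (q := q) (p := p) (hr.le.trans hrr') hs (by linarith)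
  have hk : (r' / r) ^ q ≤ r' / r := rpow_le_self_of_one_le ((one_le_div hr).2 hrr') hq1
  rw [div_le_div_iff₀ hF hF']
  calc r * powerMeanPow p q r' s ≤ r * ((r' / r) * powerMeanPow p q r s) :=
        mul_le_mul_of_nonneg_left ((powerMeanPow_le_mul_rpow hp hq hr hrr' hs).trans
          (mul_le_mul_of_nonneg_right hk hF.le)) hr.le
    _ = r' * powerMeanPow p q r s := by field_simp

lemma sub_div_powerMeanPow_le_add (hp : 0 < p) (hq : 0 ≤ q) (hpq : 1 ≤ p + q)
    (h3 : 2 ≤ 3 * p + q) {a b c : ℝ} (ha : 0 ≤ a) (hac : a ≤ c) (hc : 0 < c) (hcb : c ≤ b) :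
    (b - a) / powerMeanPow p q a b ≤
      (c - a) / powerMeanPow p q a c + (b - c) / powerMeanPow p q c b := by
  have := rpow_nonneg ha p
  have := rpow_pos_of_pos hc p
  have := rpow_pos_of_pos (hc.trans_le hcb) p
  have key := rayDist_le_add hp hq hpq h3 ha hac hc hcb
  simp only [rayDist] at key
  rw [rpow_neg (by positivity), rpow_neg (by positivity), rpow_neg (by positivity)] at key
  simpa only [powerMeanPow, div_eq_mul_inv] using key

lemma mul_le_add_of_triangle_of_ptolemy {a b c u v w X Y Z l m : ℝ} (hu : 0 ≤ u) (hv : 0 ≤ v)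
    (hw : 0 ≤ w) (hl : 0 ≤ l) (hm : 0 ≤ m) (htri : u ≤ v + w) (hpt : c * u ≤ b * v + a * w)
    (hX : X ≤ l + c * m) (hY : l + b * m ≤ Y) (hZ : l + a * m ≤ Z) :
    u * X ≤ v * Y + w * Z :=
  calc u * X ≤ u * l + (c * u) * m := by nlinarith
    _ ≤ (v + w) * l + (b * v + a * w) * m := by gcongr
    _ = v * (l + b * m) + w * (l + a * m) := by ring
    _ ≤ v * Y + w * Z := by gcongr

lemma div_powerMeanPow_le_add_of_le (hp : 0 < p) (hq : 0 ≤ q) (hq1 : q ≤ 1) (hpq : 1 ≤ p + q)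
    (h3 : 2 ≤ 3 * p + q) {a b c u v w : ℝ} (ha : 0 ≤ a) (hb : 0 < b) (hc : 0 ≤ c) (hu : 0 ≤ u)
    (hv : 0 ≤ v) (hw : 0 ≤ w) (hac : 0 < a + c) (hab : a ≤ b) (htri : u ≤ v + w)
    (hpt : c * u ≤ b * v + a * w) :
    u / powerMeanPow p q a b ≤ v / powerMeanPow p q a c + w / powerMeanPow p q c b := by
  set P := powerMeanPow p q a c
  set Q := powerMeanPow p q c b
  set R := powerMeanPow p q a b
  have hP : 0 < P := powerMeanPow_pos ha hc hac
  have hQ : 0 < Q := powerMeanPow_pos hc hb.le (by linarith)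
  have hR : 0 < R := powerMeanPow_pos ha hb.le (by linarith)
  have hmono {s r r' : ℝ} (hs : 0 ≤ s) (hr : 0 ≤ r) (hrr' : r ≤ r') :
      r / powerMeanPow p q r s ≤ r' / powerMeanPow p q r' s :=
    monotoneOn_div_powerMeanPow hp hq hq1 hs hr (hr.trans hrr') hrr'
  simp only [div_eq_mul_inv]
  rcases le_or_gt c a with hca | hac
  · refine mul_le_add_of_triangle_of_ptolemy hu hv hw (inv_nonneg.2 hR.le) le_rfl htri hpt
      (l := R⁻¹) (m := 0) (by simp) ?_ ?_
    · simpa using inv_anti₀ hP (powerMeanPow_le_powerMeanPow_right hp hq ha hc (hca.trans hab))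
    · simpa using inv_anti₀ hQ (powerMeanPow_le_powerMeanPow_left hp hq hc hb.le hca)
  rcases le_or_gt c b with hcb | hbc
  · have hcpos : 0 < c := by linarith
    have hba : 0 < b - a := by linarith
    have hPQ : P ≤ Q := by
      simpa only [P, powerMeanPow_comm a c] using
        powerMeanPow_le_powerMeanPow_right hp hq hc ha hab
    have hPQ' : a / P ≤ b / Q :=
      calc a / P ≤ c / powerMeanPow p q c c := hmono hc ha hac.le
        _ ≤ b / Q := by simpa only [Q, powerMeanPow_comm b c] using hmono hc hc hcb
    refine mul_le_add_of_triangle_of_ptolemy hu hv hw (l := (b / Q - a / P) / (b - a))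
      (m := (P⁻¹ - Q⁻¹) / (b - a)) (div_nonneg (by linarith) hba.le)
      (div_nonneg (by rw [sub_nonneg]; exact inv_anti₀ hP hPQ) hba.le) htri hpt ?_
      (le_of_eq (by field_simp; ring)) (le_of_eq (by field_simp; ring))
    calc R⁻¹ = (b - a) / R / (b - a) := by field_simp
      _ ≤ ((c - a) / P + (b - c) / Q) / (b - a) := div_le_div_of_nonneg_right
          (sub_div_powerMeanPow_le_add hp hq hpq h3 ha hac.le hcpos hcb) hba.le
      _ = _ := by field_simp; ring
  · have hcpos : 0 < c := hb.trans hbc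
    refine mul_le_add_of_triangle_of_ptolemy hu hv hw le_rfl
      (div_nonneg (inv_nonneg.2 hR.le) hcpos.le) htri hpt (l := 0) (m := R⁻¹ / c)
      (by rw [zero_add, mul_div_cancel₀ _ hcpos.ne']) ?_ ?_
    · calc 0 + b * (R⁻¹ / c) = b / powerMeanPow p q b a / c := by
            rw [powerMeanPow_comm]; ring
        _ ≤ c / powerMeanPow p q c a / c :=
            div_le_div_of_nonneg_right (hmono ha hb.le hbc.le) hcpos.le
        _ = P⁻¹ := by simp only [P, powerMeanPow_comm c a]; field_simp
    · calc 0 + a * (R⁻¹ / c) = a / R / c := by ring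
        _ ≤ c / Q / c :=
            div_le_div_of_nonneg_right (hmono hb.le ha (hab.trans hbc.le)) hcpos.le
        _ = Q⁻¹ := by field_simp

lemma div_powerMeanPow_le_add (hp : 0 < p) (hq : 0 ≤ q) (hq1 : q ≤ 1) (hpq : 1 ≤ p + q)
    (h3 : 2 ≤ 3 * p + q) {a b c u v w : ℝ} (ha : 0 ≤ a) (hb : 0 ≤ b) (hc : 0 ≤ c) (hu : 0 ≤ u)
    (hv : 0 ≤ v) (hw : 0 ≤ w) (hab : 0 < a + b) (hac : 0 < a + c) (hcb : 0 < c + b)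
    (htri : u ≤ v + w) (hpt : c * u ≤ b * v + a * w) :
    u / powerMeanPow p q a b ≤ v / powerMeanPow p q a c + w / powerMeanPow p q c b := by
  rcases le_total a b with hle | hle
  · exact div_powerMeanPow_le_add_of_le hp hq hq1 hpq h3 ha (by linarith) hc hu hv hw hac hle
      htri hpt
  · have := div_powerMeanPow_le_add_of_le hp hq hq1 hpq h3 hb (by linarith) hc hu hw hv
      (by linarith) hle (by linarith) (by linarith)
    rw [powerMeanPow_comm b a, powerMeanPow_comm b c, powerMeanPow_comm c a] at this
    linarith

lemma norm_add_norm_pos_of_ne {E : Type*} [NormedAddCommGroup E] {x y : E} (h : x ≠ y) :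
    0 < ‖x‖ + ‖y‖ := by
  rcases eq_or_ne x 0 with rfl | hx
  · exact add_pos_of_nonneg_of_pos (norm_nonneg _) (norm_pos_iff.2 h.symm)
  · exact add_pos_of_pos_of_nonneg (norm_pos_iff.2 hx) (norm_nonneg _)

lemma norm_sub_div_powerMeanPow_le_add {E : Type*} [NormedAddCommGroup E]
    [InnerProductSpace ℝ E] (hp : 0 < p) (hq : 0 ≤ q) (hq1 : q ≤ 1) (hpq : 1 ≤ p + q)
    (h3 : 2 ≤ 3 * p + q) (x y z : E) :
    ‖x - y‖ / powerMeanPow p q ‖x‖ ‖y‖ ≤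
      ‖x - z‖ / powerMeanPow p q ‖x‖ ‖z‖ + ‖z - y‖ / powerMeanPow p q ‖z‖ ‖y‖ := by
  have hρ (x y : E) : 0 ≤ ‖x - y‖ / powerMeanPow p q ‖x‖ ‖y‖ :=
    div_nonneg (norm_nonneg _) (powerMeanPow_nonneg (norm_nonneg _) (norm_nonneg _))
  rcases eq_or_ne x y with rfl | hxy
  · simpa using add_nonneg (hρ x z) (hρ z x)
  rcases eq_or_ne x z with rfl | hxz
  · simp
  rcases eq_or_ne z y with rfl | hzy
  · simp
  have hptolemy : ‖z‖ * ‖x - y‖ ≤ ‖y‖ * ‖x - z‖ + ‖x‖ * ‖z - y‖ := by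
    have := EuclideanGeometry.mul_dist_le_mul_dist_add_mul_dist x 0 y z
    simp only [dist_eq_norm, sub_zero, zero_sub, norm_neg] at this
    rw [norm_sub_rev z y]
    linarith
  exact div_powerMeanPow_le_add hp hq hq1 hpq h3 (norm_nonneg x) (norm_nonneg y) (norm_nonneg z)
    (norm_nonneg _) (norm_nonneg _) (norm_nonneg _) (norm_add_norm_pos_of_ne hxy)
    (norm_add_norm_pos_of_ne hxz) (norm_add_norm_pos_of_ne hzy)
    (norm_sub_le_norm_sub_add_norm_sub x z y) hptolemy

end RelativeDistance

/-- For `0 < q ≤ 1` and `p ≥ max{1−q, (2−q)/3}`, the `(p,q)`-relative distance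
`ρ_{p,q}(x,y) = |x−y| / A_p(|x|,|y|)^q` is a metric on `ℝⁿ`
(with `ρ_{p,q}(0,0) = 0`, as `0/0 = 0` in Lean). -/
theorem stmt_14 (n : ℕ) (p q : ℝ) (hq0 : 0 < q) (hq1 : q ≤ 1)
    (hp : max (1 - q) ((2 - q) / 3) ≤ p) :
    let ρ : EuclideanSpace ℝ (Fin n) → EuclideanSpace ℝ (Fin n) → ℝ :=
      fun x y => ‖x - y‖ / ((‖x‖ ^ p + ‖y‖ ^ p) / 2) ^ (q / p)
    (∀ x y, 0 ≤ ρ x y) ∧ (∀ x y, ρ x y = ρ y x) ∧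
    (∀ x y, ρ x y = 0 ↔ x = y) ∧
    (∀ x y z, ρ x y ≤ ρ x z + ρ z y) := by
  have hpq : 1 ≤ p + q := by linarith [le_max_left (1 - q) ((2 - q) / 3)]
  have h3 : 2 ≤ 3 * p + q := by linarith [le_max_right (1 - q) ((2 - q) / 3)]
  have hp0 : 0 < p := by linarith
  intro ρ
  refine ⟨fun x y => div_nonneg (norm_nonneg _)
      (powerMeanPow_nonneg (norm_nonneg _) (norm_nonneg _)),
    fun x y => ?_, fun x y => ⟨fun h => ?_, fun h => by simp [ρ, h]⟩,
    norm_sub_div_powerMeanPow_le_add hp0 hq0.le hq1 hpq h3⟩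
  · simp only [ρ, norm_sub_rev x y, add_comm (‖x‖ ^ p)]
  · by_contra hxy
    exact (div_pos (norm_pos_iff.2 (sub_ne_zero.2 hxy))
      (powerMeanPow_pos (norm_nonneg _) (norm_nonneg _) (norm_add_norm_pos_of_ne hxy))).ne' h
end

section
/- Let f : [0,∞) → (0,∞) and set M(x,y) = f(x)f(y). Then ρ_M(x,y) = |x−y|/(f(|x|)f(|y|)) is a metric on ℝ if and only if f is increasing, f(x)/x is decreasing on (0,∞), and f is convex on [0,∞). -/
/-!
Clearing denominators turns the triangle inequality for `ρ` into `WeightedTriangle f`.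
Evaluated at `(b, -b, a)`, `(a, -a, b)` and `(z, x, y)` for `0 ≤ a ≤ b` and `0 ≤ x ≤ y ≤ z`, it
gives monotonicity, `a * f b ≤ b * f a`, and the three-point form of convexity. Conversely, by
symmetry under `x ↦ -x` we may take `x ≥ 0`; since `| |x| - |z| | ≤ |x - z|`, it suffices to prove
the inequality for `|x|, |y|, |z|` when `y ≥ 0`, and its variant with `|x - y| = |x| + |y|` when
`y < 0`. Both follow by a case analysis on the order of the three points.
-/

open Set

section LinearOrderedField

variable {𝕜 : Type*} [Field 𝕜] [LinearOrder 𝕜] [IsStrictOrderedRing 𝕜] {s : Set 𝕜} {f : 𝕜 → 𝕜}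

theorem ConvexOn.sub_mul_le {x y z : 𝕜} (hf : ConvexOn 𝕜 s f) (hx : x ∈ s) (hz : z ∈ s)
    (hxy : x ≤ y) (hyz : y ≤ z) : (z - x) * f y ≤ (z - y) * f x + (y - x) * f z := by
  rcases hxy.eq_or_lt with rfl | hxy
  · simp
  rcases hyz.eq_or_lt with rfl | hyz
  · simp
  exact hf.secant_mono_aux1 hx hz hxy hyz

theorem convexOn_of_sub_mul_le (hs : Convex 𝕜 s)
    (hf : ∀ ⦃x y z⦄, x ∈ s → z ∈ s → x ≤ y → y ≤ z →
      (z - x) * f y ≤ (z - y) * f x + (y - x) * f z) :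
    ConvexOn 𝕜 s f := by
  refine convexOn_of_slope_mono_adjacent hs fun hx hz hxy hyz => ?_
  rw [div_le_div_iff₀ (sub_pos.2 hxy) (sub_pos.2 hyz)]
  linarith [hf hx hz hxy.le hyz.le]

theorem antitoneOn_div_of_mul_le (h : ∀ ⦃a b : 𝕜⦄, 0 < a → a ≤ b → a * f b ≤ b * f a) :
    AntitoneOn (fun x => f x / x) (Ioi 0) := by
  intro a (ha : 0 < a) b (hb : 0 < b) hab
  rw [div_le_div_iff₀ hb ha]
  linarith [h ha hab]

theorem mul_le_mul_of_antitoneOn_div (hf0 : 0 ≤ f 0) (h : AntitoneOn (fun x => f x / x) (Ioi 0))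
    {a b : 𝕜} (ha : 0 ≤ a) (hab : a ≤ b) : a * f b ≤ b * f a := by
  rcases ha.eq_or_lt with rfl | ha
  · simpa using mul_nonneg hab hf0
  have hb := ha.trans_le hab
  have h' : f b / b ≤ f a / a := h ha hb hab
  rw [div_le_div_iff₀ hb ha] at h'
  linarith

end LinearOrderedField

theorem div_mul_le_div_mul_add_div_mul_iff {𝕜 : Type*} [Field 𝕜] [LinearOrder 𝕜]
    [IsStrictOrderedRing 𝕜] {a b c : 𝕜} (d₁ d₂ d₃ : 𝕜) (ha : 0 < a) (hb : 0 < b) (hc : 0 < c) :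
    d₁ / (a * b) ≤ d₂ / (a * c) + d₃ / (c * b) ↔ d₁ * c ≤ d₂ * b + d₃ * a := by
  have lhs : d₁ / (a * b) = d₁ * c / (a * b * c) := by field_simp
  have rhs : d₂ / (a * c) + d₃ / (c * b) = (d₂ * b + d₃ * a) / (a * b * c) := by field_simp
  rw [lhs, rhs, div_le_div_iff_of_pos_right (by positivity)]

section WeightedDistance

variable {f : ℝ → ℝ}

/-- The triangle inequality for `ρ x y = |x - y| / (f |x| * f |y|)`, multiplied by
`f |x| * f |y| * f |z|`. -/
def WeightedTriangle (f : ℝ → ℝ) : Prop :=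
  ∀ x y z : ℝ, |x - y| * f |z| ≤ |x - z| * f |y| + |z - y| * f |x|

theorem triangle_div_iff {g : ℝ → ℝ} (hg : ∀ x, 0 < g x) :
    (∀ x y z : ℝ, |x - y| / (g x * g y) ≤ |x - z| / (g x * g z) + |z - y| / (g z * g y)) ↔
      ∀ x y z : ℝ, |x - y| * g z ≤ |x - z| * g y + |z - y| * g x :=
  forall₃_congr fun x y z => div_mul_le_div_mul_add_div_mul_iff _ _ _ (hg x) (hg y) (hg z)

theorem monotoneOn_of_weightedTriangle (htri : WeightedTriangle f) :
    MonotoneOn f (Ici 0) := by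
  intro a (ha : 0 ≤ a) b (hb : 0 ≤ b) hab
  rcases hab.eq_or_lt with rfl | hab
  · rfl
  have h := htri b (-b) a
  rw [sub_neg_eq_add, sub_neg_eq_add, abs_neg, abs_of_nonneg ha, abs_of_nonneg hb,
    abs_of_nonneg (by linarith : (0 : ℝ) ≤ b + b), abs_of_pos (sub_pos.2 hab),
    abs_of_nonneg (by linarith : (0 : ℝ) ≤ a + b)] at h
  nlinarith

theorem mul_le_mul_of_weightedTriangle (htri : WeightedTriangle f)
    {a b : ℝ} (ha : 0 ≤ a) (hab : a ≤ b) : a * f b ≤ b * f a := by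
  have h := htri a (-a) b
  rw [sub_neg_eq_add, sub_neg_eq_add, abs_neg, abs_of_nonneg ha, abs_of_nonneg (ha.trans hab),
    abs_of_nonneg (by linarith : (0 : ℝ) ≤ a + a), abs_of_nonpos (sub_nonpos.2 hab),
    abs_of_nonneg (by linarith : (0 : ℝ) ≤ b + a)] at h
  linarith

theorem sub_mul_le_of_weightedTriangle (htri : WeightedTriangle f)
    {x y z : ℝ} (hx : 0 ≤ x) (hxy : x ≤ y) (hyz : y ≤ z) :
    (z - x) * f y ≤ (z - y) * f x + (y - x) * f z := by
  have h := htri z x y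
  rwa [abs_of_nonneg hx, abs_of_nonneg (hx.trans hxy), abs_of_nonneg (hx.trans (hxy.trans hyz)),
    abs_of_nonneg (by linarith : (0 : ℝ) ≤ z - x), abs_of_nonneg (sub_nonneg.2 hyz),
    abs_of_nonneg (sub_nonneg.2 hxy)] at h

theorem nonneg_of_monotoneOn_of_mul_le (hmono : MonotoneOn f (Ici 0))
    (hslope : ∀ ⦃a b : ℝ⦄, 0 ≤ a → a ≤ b → a * f b ≤ b * f a) {x : ℝ} (hx : 0 ≤ x) :
    0 ≤ f x := by
  have h0 : 0 ≤ f 0 := by simpa using hslope le_rfl zero_le_one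
  exact h0.trans (hmono self_mem_Ici hx hx)

theorem weightedTriangle_of_nonneg (hmono : MonotoneOn f (Ici 0))
    (hslope : ∀ ⦃a b : ℝ⦄, 0 ≤ a → a ≤ b → a * f b ≤ b * f a) (hconv : ConvexOn ℝ (Ici 0) f)
    {a b c : ℝ} (ha : 0 ≤ a) (hb : 0 ≤ b) (hc : 0 ≤ c) :
    |a - b| * f c ≤ |a - c| * f b + |c - b| * f a := by
  wlog hab : a ≤ b generalizing a b
  · have h := this hb ha (le_of_not_ge hab)
    rw [abs_sub_comm b a, abs_sub_comm b c, abs_sub_comm c a] at h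
    linarith
  rw [abs_of_nonpos (sub_nonpos.2 hab)]
  rcases le_total c a with hca | hac
  · rw [abs_of_nonneg (sub_nonneg.2 hca), abs_of_nonpos (by linarith : c - b ≤ 0)]
    have hfca := hmono hc ha hca
    have hfa := nonneg_of_monotoneOn_of_mul_le hmono hslope ha
    have hfb := nonneg_of_monotoneOn_of_mul_le hmono hslope hb
    nlinarith [mul_le_mul_of_nonneg_left hfca (sub_nonneg.2 hab), mul_nonneg (sub_nonneg.2 hca) hfa,
      mul_nonneg (sub_nonneg.2 hca) hfb]
  rcases le_total c b with hcb | hbc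
  · rw [abs_of_nonpos (sub_nonpos.2 hac), abs_of_nonpos (sub_nonpos.2 hcb)]
    linarith [hconv.sub_mul_le ha hb hac hcb]
  · rw [abs_of_nonpos (sub_nonpos.2 hac), abs_of_nonneg (sub_nonneg.2 hbc)]
    rcases hb.eq_or_lt with rfl | hb
    · obtain rfl : a = 0 := le_antisymm hab ha
      nlinarith [nonneg_of_monotoneOn_of_mul_le hmono hslope le_rfl]
    have hfa := nonneg_of_monotoneOn_of_mul_le hmono hslope ha
    have hfb := nonneg_of_monotoneOn_of_mul_le hmono hslope hb.le
    -- multiplied by `b`, the claim follows from `b * f c ≤ c * f b`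
    nlinarith [hslope hb.le hbc, mul_nonneg ha (sub_nonneg.2 hbc),
      mul_nonneg hb.le (sub_nonneg.2 hbc)]

theorem weightedTriangle_of_opposite_signs (hmono : MonotoneOn f (Ici 0))
    (hslope : ∀ ⦃a b : ℝ⦄, 0 ≤ a → a ≤ b → a * f b ≤ b * f a) (hconv : ConvexOn ℝ (Ici 0) f)
    {a b c : ℝ} (ha : 0 ≤ a) (hb : 0 ≤ b) (hc : 0 ≤ c) :
    (a + b) * f c ≤ |a - c| * f b + (c + b) * f a := by
  rcases le_total c a with hca | hac
  · rw [abs_of_nonneg (sub_nonneg.2 hca)]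
    have hfca := hmono hc ha hca
    rcases le_total c b with hcb | hbc
    · nlinarith [mul_le_mul_of_nonneg_left (hmono hc hb hcb) (sub_nonneg.2 hca),
        mul_le_mul_of_nonneg_left hfca (add_nonneg hc hb)]
    · nlinarith [hconv.sub_mul_le hb ha hbc hca, mul_le_mul_of_nonneg_left hfca hb]
  rw [abs_of_nonpos (sub_nonpos.2 hac)]
  rcases le_total c b with hcb | hbc
  · linarith [hconv.sub_mul_le ha hb hac hcb, hslope ha hac]
  rcases le_total a b with hab | hba
  · linarith [hslope hb hbc, hslope ha hab, hslope ha hac]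
  rcases ha.eq_or_lt with rfl | ha
  · obtain rfl : b = 0 := le_antisymm hba hb
    nlinarith [nonneg_of_monotoneOn_of_mul_le hmono hslope hc,
      nonneg_of_monotoneOn_of_mul_le hmono hslope le_rfl]
  -- multiplied by `a`, the claim follows from `a * f c ≤ c * f a` and `b * f a ≤ a * f b`
  nlinarith [mul_le_mul_of_nonneg_left (hslope ha.le hac) (add_nonneg ha.le hb),
    mul_le_mul_of_nonneg_left (hslope hb hba) (sub_nonneg.2 hac)]

theorem weightedTriangle_of_convexOn (hmono : MonotoneOn f (Ici 0))
    (hslope : ∀ ⦃a b : ℝ⦄, 0 ≤ a → a ≤ b → a * f b ≤ b * f a) (hconv : ConvexOn ℝ (Ici 0) f) :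
    WeightedTriangle f := by
  intro x y z
  wlog hx : 0 ≤ x generalizing x y z
  · simpa only [← neg_sub', abs_neg] using this (-x) (-y) (-z) (by linarith)
  have hfx := nonneg_of_monotoneOn_of_mul_le hmono hslope (abs_nonneg x)
  have hfy := nonneg_of_monotoneOn_of_mul_le hmono hslope (abs_nonneg y)
  have hxz := mul_le_mul_of_nonneg_right (abs_abs_sub_abs_le_abs_sub x z) hfy
  rcases le_or_gt 0 y with hy | hy
  · have hxy : |x - y| = |(|x| - |y|)| := by rw [abs_of_nonneg hx, abs_of_nonneg hy]
    have hzy := mul_le_mul_of_nonneg_right (abs_abs_sub_abs_le_abs_sub z y) hfx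
    have h := weightedTriangle_of_nonneg hmono hslope hconv (abs_nonneg x) (abs_nonneg y)
      (abs_nonneg z)
    rw [hxy]
    linarith
  have hxy : |x - y| = |x| + |y| := by
    rw [abs_of_nonneg hx, abs_of_neg hy, abs_of_pos (by linarith)]; ring
  rcases le_or_gt 0 z with hz | hz
  · have hzy : |z - y| = |z| + |y| := by
      rw [abs_of_nonneg hz, abs_of_neg hy, abs_of_pos (by linarith)]; ring
    have h := weightedTriangle_of_opposite_signs hmono hslope hconv (abs_nonneg x) (abs_nonneg y)
      (abs_nonneg z)
    rw [hxy, hzy]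
    linarith
  · have hxz' : |x - z| = |z| + |x| := by
      rw [abs_of_nonneg hx, abs_of_neg hz, abs_of_pos (by linarith)]; ring
    have hzy := mul_le_mul_of_nonneg_right (abs_abs_sub_abs_le_abs_sub y z) hfx
    have h := weightedTriangle_of_opposite_signs hmono hslope hconv (abs_nonneg y) (abs_nonneg x)
      (abs_nonneg z)
    rw [hxy, hxz', abs_sub_comm z y]
    linarith

end WeightedDistance

/-- For `f : [0,∞) → (0,∞)` and `M(x,y) = f(x)f(y)`, `ρ_M` is a metric on `ℝ`
iff `f` is increasing, `f(x)/x` is decreasing on `(0,∞)` and `f` is convex. -/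
theorem stmt_15 (f : ℝ → ℝ) (hf : ∀ x, 0 ≤ x → 0 < f x) :
    (let ρ : ℝ → ℝ → ℝ := fun x y => |x - y| / (f |x| * f |y|)
     (∀ x y, 0 ≤ ρ x y) ∧ (∀ x y, ρ x y = ρ y x) ∧
     (∀ x y, ρ x y = 0 ↔ x = y) ∧
     (∀ x y z, ρ x y ≤ ρ x z + ρ z y)) ↔
    (MonotoneOn f (Set.Ici 0) ∧
     AntitoneOn (fun x => f x / x) (Set.Ioi 0) ∧
     ConvexOn ℝ (Set.Ici 0) f) := by
  have hg (x : ℝ) : 0 < f |x| := hf _ (abs_nonneg x)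
  dsimp only
  rw [triangle_div_iff hg]
  constructor
  · rintro ⟨-, -, -, htri⟩
    exact ⟨monotoneOn_of_weightedTriangle htri,
      antitoneOn_div_of_mul_le fun a b ha hab => mul_le_mul_of_weightedTriangle htri ha.le hab,
      convexOn_of_sub_mul_le (convex_Ici 0) fun _ _ _ hx _ =>
        sub_mul_le_of_weightedTriangle htri hx⟩
  · rintro ⟨hmono, hanti, hconv⟩
    have hslope (a b : ℝ) : 0 ≤ a → a ≤ b → a * f b ≤ b * f a :=
      mul_le_mul_of_antitoneOn_div (hf 0 le_rfl).le hanti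
    refine ⟨fun x y => div_nonneg (abs_nonneg _) (mul_pos (hg x) (hg y)).le,
      fun x y => by rw [abs_sub_comm, mul_comm], fun x y => ?_,
      weightedTriangle_of_convexOn hmono hslope hconv⟩
    simp [(hg x).ne', (hg y).ne', sub_eq_zero]
end

section
/- Let f : [0,∞) → (0,∞) be increasing and convex with f(x)/x decreasing on (0,∞). Then ρ(x,y) = ‖x−y‖/(f(‖x‖)f(‖y‖)) is a metric on ℝⁿ. -/
/-- Supporting-line lemma, mixed case `a ≤ c ≤ b`. -/
lemma stmt_16_key_mid (f : ℝ → ℝ) (hf : ∀ x, 0 ≤ x → 0 < f x)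
    (hmono : MonotoneOn f (Set.Ici 0))
    (hMI : AntitoneOn (fun x => f x / x) (Set.Ioi 0))
    (hconv : ConvexOn ℝ (Set.Ici 0) f)
    (a b c : ℝ) (ha : 0 ≤ a) (hb : 0 ≤ b)
    (hac : a ≤ c) (hcb : c ≤ b) :
    ∃ α β : ℝ, 0 ≤ α ∧ 0 ≤ β ∧ f c ≤ α + β * c ∧ α + β * a ≤ f a ∧ α + β * b ≤ f b := by
  have hc : (0:ℝ) ≤ c := ha.trans hac
  rcases eq_or_lt_of_le hac with rfl | hlt
  · exact ⟨f a, 0, (hf a ha).le, le_refl 0, by simp, by simp,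
      by simpa using hmono (Set.mem_Ici.2 ha) (Set.mem_Ici.2 hb) hcb⟩
  · have hcpos : 0 < c := lt_of_le_of_lt ha hlt
    set m : ℝ := (f c - f a) / (c - a) with hm
    have hca : 0 < c - a := by linarith
    have hmnn : 0 ≤ m := div_nonneg (by
      have := hmono (Set.mem_Ici.2 ha) (Set.mem_Ici.2 hc) hac
      linarith) hca.le
    -- m ≤ f c / c, i.e. a * f c ≤ c * f a
    have hafc : a * f c ≤ c * f a := by
      rcases eq_or_lt_of_le ha with rfl | hapos
      · simpa using mul_nonneg hcpos.le (hf 0 le_rfl).le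
      · have := hMI (Set.mem_Ioi.2 hapos) (Set.mem_Ioi.2 hcpos) hac
        simp only at this
        rw [div_le_div_iff₀ hcpos hapos] at this
        linarith
    have hmc : m * c ≤ f c := by
      rw [hm, div_mul_eq_mul_div, div_le_iff₀ hca]
      nlinarith
    refine ⟨f c - m * c, m, by linarith, hmnn, le_of_eq (by ring), ?_, ?_⟩
    · have : m * (c - a) = f c - f a := by
        rw [hm]; field_simp
      nlinarith
    · rcases eq_or_lt_of_le hcb with rfl | hcb'
      · have : m * (c - a) = f c - f a := by rw [hm]; field_simp
        nlinarith
      · have hs := hconv.slope_mono_adjacent (Set.mem_Ici.2 ha) (Set.mem_Ici.2 (hc.trans hcb))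
          hlt hcb'
        rw [← hm, div_le_div_iff₀ hca (by linarith)] at hs
        have hmb : m * (b - c) ≤ f b - f c := by
          rw [hm, div_mul_eq_mul_div, div_le_iff₀ hca]
          nlinarith
        linarith

/-- Supporting-line lemma: general case. -/
lemma stmt_16_key (f : ℝ → ℝ) (hf : ∀ x, 0 ≤ x → 0 < f x)
    (hmono : MonotoneOn f (Set.Ici 0))
    (hMI : AntitoneOn (fun x => f x / x) (Set.Ioi 0))
    (hconv : ConvexOn ℝ (Set.Ici 0) f)
    (a b c : ℝ) (ha : 0 ≤ a) (hb : 0 ≤ b) (hc : 0 ≤ c) :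
    ∃ α β : ℝ, 0 ≤ β ∧ f c ≤ α + β * c ∧ α + β * a ≤ f a ∧ α + β * b ≤ f b ∧
      0 ≤ α := by
  rcases le_total c a with hca | hac
  · rcases le_total c b with hcb | hbc
    · exact ⟨f c, 0, le_refl 0, by simp,
        by simpa using hmono (Set.mem_Ici.2 hc) (Set.mem_Ici.2 ha) hca,
        by simpa using hmono (Set.mem_Ici.2 hc) (Set.mem_Ici.2 hb) hcb, (hf c hc).le⟩
    · obtain ⟨α, β, h1, h2, h3, h4, h5⟩ :=
        stmt_16_key_mid f hf hmono hMI hconv b a c hb ha hbc hca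
      exact ⟨α, β, h2, h3, h5, h4, h1⟩
  · rcases le_total c b with hcb | hbc
    · obtain ⟨α, β, h1, h2, h3, h4, h5⟩ :=
        stmt_16_key_mid f hf hmono hMI hconv a b c ha hb hac hcb
      exact ⟨α, β, h2, h3, h4, h5, h1⟩
    · -- a ≤ c, b ≤ c
      rcases eq_or_lt_of_le hc with rfl | hcpos
      · have ha0 : a = 0 := le_antisymm hac ha
        have hb0 : b = 0 := le_antisymm hbc hb
        subst ha0; subst hb0
        exact ⟨f 0, 0, le_refl 0, by simp, by simp, by simp, (hf 0 le_rfl).le⟩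
      · refine ⟨0, f c / c, div_nonneg (hf c hc).le hc, by
          rw [zero_add, div_mul_cancel₀ _ hcpos.ne'], ?_, ?_, le_refl 0⟩
        · rcases eq_or_lt_of_le ha with rfl | hapos
          · simpa using (hf 0 le_rfl).le
          · have := hMI (Set.mem_Ioi.2 hapos) (Set.mem_Ioi.2 hcpos) hac
            simp only at this
            rw [zero_add, div_mul_eq_mul_div, div_le_iff₀ hcpos]
            rw [div_le_div_iff₀ hcpos hapos] at this
            nlinarith
        · rcases eq_or_lt_of_le hb with rfl | hbpos
          · simpa using (hf 0 le_rfl).le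
          · have := hMI (Set.mem_Ioi.2 hbpos) (Set.mem_Ioi.2 hcpos) hbc
            simp only at this
            rw [zero_add, div_mul_eq_mul_div, div_le_iff₀ hcpos]
            rw [div_le_div_iff₀ hcpos hbpos] at this
            nlinarith

/-- If `f : [0,∞) → (0,∞)` is increasing and convex with `f(x)/x` decreasing
on `(0,∞)`, then `ρ(x,y) = ‖x−y‖/(f(‖x‖)f(‖y‖))` is a metric on `ℝⁿ`. -/
theorem stmt_16 (n : ℕ) (f : ℝ → ℝ) (hf : ∀ x, 0 ≤ x → 0 < f x)
    (hmono : MonotoneOn f (Set.Ici 0))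
    (hMI : AntitoneOn (fun x => f x / x) (Set.Ioi 0))
    (hconv : ConvexOn ℝ (Set.Ici 0) f) :
    let ρ : EuclideanSpace ℝ (Fin n) → EuclideanSpace ℝ (Fin n) → ℝ :=
      fun x y => ‖x - y‖ / (f ‖x‖ * f ‖y‖)
    (∀ x y, 0 ≤ ρ x y) ∧ (∀ x y, ρ x y = ρ y x) ∧
    (∀ x y, ρ x y = 0 ↔ x = y) ∧
    (∀ x y z, ρ x y ≤ ρ x z + ρ z y) := by
  intro ρ
  have hpos : ∀ x : EuclideanSpace ℝ (Fin n), 0 < f ‖x‖ :=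
    fun x => hf _ (norm_nonneg x)
  refine ⟨fun x y => div_nonneg (norm_nonneg _) (mul_pos (hpos x) (hpos y)).le,
    fun x y => by simp only [ρ, norm_sub_rev x y, mul_comm], fun x y => ?_, fun x y z => ?_⟩
  · simp only [ρ]
    rw [div_eq_zero_iff]
    constructor
    · rintro (h | h)
      · rwa [norm_eq_zero, sub_eq_zero] at h
      · exact absurd h (mul_pos (hpos x) (hpos y)).ne'
    · rintro rfl; simp
  · simp only [ρ]
    obtain ⟨α, β, hβ, h1, h2, h3, hα⟩ :=
      stmt_16_key f hf hmono hMI hconv ‖x‖ ‖y‖ ‖z‖ (norm_nonneg x) (norm_nonneg y)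
        (norm_nonneg z)
    have ptol := EuclideanGeometry.mul_dist_le_mul_dist_add_mul_dist x z y
      (0 : EuclideanSpace ℝ (Fin n))
    simp only [dist_eq_norm, sub_zero] at ptol
    have tri : ‖x - y‖ ≤ ‖x - z‖ + ‖z - y‖ := norm_sub_le_norm_sub_add_norm_sub x z y
    have key : f ‖z‖ * ‖x - y‖ ≤ f ‖y‖ * ‖x - z‖ + f ‖x‖ * ‖z - y‖ := by
      have step1 : f ‖z‖ * ‖x - y‖ ≤ α * ‖x - y‖ + β * (‖z‖ * ‖x - y‖) := by
        nlinarith [norm_nonneg (x - y)]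
      have step2 : α * ‖x - y‖ + β * (‖z‖ * ‖x - y‖) ≤
          (α + β * ‖y‖) * ‖x - z‖ + (α + β * ‖x‖) * ‖z - y‖ := by
        nlinarith [norm_nonneg (x - z), norm_nonneg (z - y)]
      have step3 : (α + β * ‖y‖) * ‖x - z‖ + (α + β * ‖x‖) * ‖z - y‖ ≤
          f ‖y‖ * ‖x - z‖ + f ‖x‖ * ‖z - y‖ := by
        have := mul_le_mul_of_nonneg_right h3 (norm_nonneg (x - z))
        have := mul_le_mul_of_nonneg_right h2 (norm_nonneg (z - y))
        linarith
      linarith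
    have hx := hpos x; have hy := hpos y; have hz := hpos z
    rw [div_add_div _ _ (mul_pos hx hz).ne' (mul_pos hz hy).ne',
      div_le_div_iff₀ (mul_pos hx hy) (mul_pos (mul_pos hx hz) (mul_pos hz hy))]
    nlinarith [mul_pos (mul_pos hx hy) hz, mul_le_mul_of_nonneg_left key
      (mul_pos (mul_pos hx hy) hz).le]
end

section
/- For p ≥ 1, the function d(x,y) = ‖x−y‖ / ((1+‖x‖^p)^{1/p} (1+‖y‖^p)^{1/p}) is a metric on any real inner product space; for 0 < p < 1 it is not a metric on ℝ. -/
/-!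
Write `f t = (1 + t ^ p) ^ (1 / p)`, the `p`-norm of `(1, t)`. For `p ≥ 1`, Ptolemy's inequality
at the origin, `‖x - y‖ ‖z‖ ≤ ‖x - z‖ ‖y‖ + ‖z - y‖ ‖x‖`, and the triangle inequality give, by
homogeneity, monotonicity and Minkowski's inequality for the `p`-norm on `ℝ²`,
`‖x - y‖ f ‖z‖ ≤ ‖x - z‖ f ‖y‖ + ‖z - y‖ f ‖x‖`; dividing by `f ‖x‖ f ‖y‖ f ‖z‖` is the triangle
inequality for `d`. For `p < 1` the points `0, 1, 2 ^ (1 / p)` have weights `1, 2 ^ r, 3 ^ r` with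
`r = 1 / p > 1`, and the triangle inequality through `1` would say `4 ^ r + 1 ≤ 3 ^ r + 2 ^ r`,
against the strict convexity of `t ↦ t ^ r`.
-/

open Real

section Minkowski

variable {p : ℝ}

lemma rpow_add_rpow_rpow_add_le (hp : 1 ≤ p) {a b c d : ℝ} (ha : 0 ≤ a) (hb : 0 ≤ b)
    (hc : 0 ≤ c) (hd : 0 ≤ d) :
    ((a + b) ^ p + (c + d) ^ p) ^ (1 / p) ≤
      (a ^ p + c ^ p) ^ (1 / p) + (b ^ p + d ^ p) ^ (1 / p) := by
  simpa [Fin.sum_univ_two] using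
    Real.Lp_add_le_of_nonneg (s := Finset.univ) (f := ![a, c]) (g := ![b, d]) hp
      (by simp [Fin.forall_fin_two, ha, hc]) (by simp [Fin.forall_fin_two, hb, hd])

lemma rpow_add_mul_rpow_rpow_eq (hp : p ≠ 0) {u t : ℝ} (hu : 0 ≤ u) (ht : 0 ≤ t) :
    (u ^ p + (u * t) ^ p) ^ (1 / p) = u * (1 + t ^ p) ^ (1 / p) := by
  rw [mul_rpow hu ht, ← mul_one_add, mul_rpow (by positivity) (by positivity), one_div,
    rpow_rpow_inv hu hp]

lemma mul_rpow_root_le_add (hp : 1 ≤ p) {a b c u v w : ℝ} (ha : 0 ≤ a) (hb : 0 ≤ b)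
    (hc : 0 ≤ c) (hu : 0 ≤ u) (hv : 0 ≤ v) (hw : 0 ≤ w) (hwuv : w ≤ u + v)
    (hwc : w * c ≤ u * b + v * a) :
    w * (1 + c ^ p) ^ (1 / p) ≤ u * (1 + b ^ p) ^ (1 / p) + v * (1 + a ^ p) ^ (1 / p) := by
  have hp0 : p ≠ 0 := by positivity
  calc w * (1 + c ^ p) ^ (1 / p) = (w ^ p + (w * c) ^ p) ^ (1 / p) :=
        (rpow_add_mul_rpow_rpow_eq hp0 hw hc).symm
    _ ≤ ((u + v) ^ p + (u * b + v * a) ^ p) ^ (1 / p) := by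
      have := mul_nonneg hw hc
      gcongr
    _ ≤ (u ^ p + (u * b) ^ p) ^ (1 / p) + (v ^ p + (v * a) ^ p) ^ (1 / p) :=
        rpow_add_rpow_rpow_add_le hp hu hv (by positivity) (by positivity)
    _ = u * (1 + b ^ p) ^ (1 / p) + v * (1 + a ^ p) ^ (1 / p) := by
        rw [rpow_add_mul_rpow_rpow_eq hp0 hu hb, rpow_add_mul_rpow_rpow_eq hp0 hv ha]

end Minkowski

lemma norm_sub_mul_norm_le_add {X : Type*} [NormedAddCommGroup X] [InnerProductSpace ℝ X]
    (x y z : X) : ‖x - y‖ * ‖z‖ ≤ ‖x - z‖ * ‖y‖ + ‖z - y‖ * ‖x‖ := by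
  simpa [dist_eq_norm] using EuclideanGeometry.mul_dist_le_mul_dist_add_mul_dist x z y (0 : X)

lemma norm_sub_mul_rpow_root_le {X : Type*} [NormedAddCommGroup X] [InnerProductSpace ℝ X]
    {p : ℝ} (hp : 1 ≤ p) (x y z : X) :
    ‖x - y‖ * (1 + ‖z‖ ^ p) ^ (1 / p) ≤
      ‖x - z‖ * (1 + ‖y‖ ^ p) ^ (1 / p) + ‖z - y‖ * (1 + ‖x‖ ^ p) ^ (1 / p) :=
  mul_rpow_root_le_add hp (norm_nonneg x) (norm_nonneg y) (norm_nonneg z) (norm_nonneg _)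
    (norm_nonneg _) (norm_nonneg _) (norm_sub_le_norm_sub_add_norm_sub x z y)
    (norm_sub_mul_norm_le_add x y z)

lemma div_mul_le_div_mul_add_div_mul {a b c r s t : ℝ} (hr : 0 < r) (hs : 0 < s) (ht : 0 < t)
    (h : a * t ≤ b * s + c * r) : a / (r * s) ≤ b / (r * t) + c / (t * s) := by
  rw [div_add_div _ _ (by positivity) (by positivity),
    div_le_div_iff₀ (by positivity) (by positivity)]
  nlinarith [mul_le_mul_of_nonneg_right h (by positivity : 0 ≤ r * s * t)]

lemma three_rpow_add_two_rpow_lt {r : ℝ} (hr : 1 < r) : (3 : ℝ) ^ r + 2 ^ r < 4 ^ r + 1 := by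
  have hconv := strictConvexOn_rpow hr
  have h₁ := hconv.slope_strict_mono_adjacent (x := 1) (y := 2) (z := 3) (by norm_num)
    (by norm_num) (by norm_num) (by norm_num)
  have h₂ := hconv.slope_strict_mono_adjacent (x := 2) (y := 3) (z := 4) (by norm_num)
    (by norm_num) (by norm_num) (by norm_num)
  norm_num at h₁ h₂
  linarith

lemma exists_triangle_violation {p : ℝ} (hp0 : 0 < p) (hp1 : p < 1) :
    ∃ x y z : ℝ,
      |x - z| / ((1 + |x| ^ p) ^ (1/p) * (1 + |z| ^ p) ^ (1/p))
        + |z - y| / ((1 + |z| ^ p) ^ (1/p) * (1 + |y| ^ p) ^ (1/p))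
      < |x - y| / ((1 + |x| ^ p) ^ (1/p) * (1 + |y| ^ p) ^ (1/p)) := by
  set r := 1 / p with hr
  have hr1 : 1 < r := by rw [hr, lt_div_iff₀ hp0]; linarith
  have h2 : (1 : ℝ) ≤ 2 ^ r := one_le_rpow (by norm_num) (by positivity)
  have h2p : ((2 : ℝ) ^ r) ^ p = 2 := by
    rw [← rpow_mul (by norm_num), hr, one_div_mul_cancel hp0.ne', rpow_one]
  refine ⟨0, 2 ^ r, 1, ?_⟩
  rw [abs_of_nonneg (by positivity : (0:ℝ) ≤ 2 ^ r), h2p]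
  norm_num [zero_rpow hp0.ne']
  rw [abs_sub_comm, abs_of_nonneg (sub_nonneg.2 h2), abs_of_nonneg (by positivity)]
  have h4 : (4 : ℝ) ^ r = 2 ^ r * 2 ^ r := by
    rw [← mul_rpow (by norm_num) (by norm_num)]; norm_num
  have key := three_rpow_add_two_rpow_lt hr1
  have h3 : (0 : ℝ) < 3 ^ r := by positivity
  field_simp
  linarith

/-- For `p ≥ 1`, `d(x,y) = ‖x−y‖/((1+‖x‖^p)^{1/p}(1+‖y‖^p)^{1/p})` is a metric
on any real inner product space; for `0 < p < 1` it is not a metric on `ℝ`. -/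
theorem stmt_17 (X : Type*) [NormedAddCommGroup X] [InnerProductSpace ℝ X]
    (p : ℝ) :
    (1 ≤ p →
      let d : X → X → ℝ :=
        fun x y => ‖x - y‖ / ((1 + ‖x‖ ^ p) ^ (1/p) * (1 + ‖y‖ ^ p) ^ (1/p))
      (∀ x y, 0 ≤ d x y) ∧ (∀ x y, d x y = d y x) ∧
      (∀ x y, d x y = 0 ↔ x = y) ∧
      (∀ x y z, d x y ≤ d x z + d z y)) ∧
    (0 < p → p < 1 →
      ∃ x y z : ℝ,
        |x - z| / ((1 + |x| ^ p) ^ (1/p) * (1 + |z| ^ p) ^ (1/p))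
          + |z - y| / ((1 + |z| ^ p) ^ (1/p) * (1 + |y| ^ p) ^ (1/p))
        < |x - y| / ((1 + |x| ^ p) ^ (1/p) * (1 + |y| ^ p) ^ (1/p))) := by
  refine ⟨fun hp => ?_, exists_triangle_violation⟩
  have hpos (x : X) : 0 < (1 + ‖x‖ ^ p) ^ (1 / p) := by positivity
  refine ⟨fun x y => by positivity, fun x y => by dsimp only; rw [norm_sub_rev, mul_comm],
    fun x y => ?_,
    fun x y z => div_mul_le_div_mul_add_div_mul (hpos x) (hpos y) (hpos z)
      (norm_sub_mul_rpow_root_le hp x y z)⟩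
  simp only [div_eq_zero_iff, norm_eq_zero, sub_eq_zero, (mul_pos (hpos x) (hpos y)).ne',
    or_false]
end

section
/- Let P : (0,1]×(0,1] → (0,∞) be symmetric, increasing in each variable, and continuous, and suppose that (x,y) ↦ ‖x−y‖ / P(1−‖x‖, 1−‖y‖) is a metric on the open unit ball Bⁿ (n ≥ 1). Then P is constant. -/
/-- If `P : (0,1]×(0,1] → (0,∞)` is symmetric, increasing and continuous and
`‖x−y‖/P(1−‖x‖,1−‖y‖)` is a metric on the open unit ball of `ℝⁿ` (`n ≥ 1`),
then `P` is constant. -/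
theorem stmt_19 (n : ℕ) (hn : 1 ≤ n) (P : ℝ → ℝ → ℝ)
    (hpos : ∀ x y, x ∈ Set.Ioc (0:ℝ) 1 → y ∈ Set.Ioc (0:ℝ) 1 → 0 < P x y)
    (hsymm : ∀ x y, x ∈ Set.Ioc (0:ℝ) 1 → y ∈ Set.Ioc (0:ℝ) 1 → P x y = P y x)
    (hmono : ∀ x, x ∈ Set.Ioc (0:ℝ) 1 → MonotoneOn (P x) (Set.Ioc 0 1))
    (hcont : ContinuousOn (fun q : ℝ × ℝ => P q.1 q.2)
      (Set.Ioc 0 1 ×ˢ Set.Ioc 0 1))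
    (hρ : let ρ : EuclideanSpace ℝ (Fin n) → EuclideanSpace ℝ (Fin n) → ℝ :=
        fun x y => ‖x - y‖ / P (1 - ‖x‖) (1 - ‖y‖)
      (∀ x y, ‖x‖ < 1 → ‖y‖ < 1 → 0 ≤ ρ x y) ∧
      (∀ x y, ‖x‖ < 1 → ‖y‖ < 1 → ρ x y = ρ y x) ∧
      (∀ x y, ‖x‖ < 1 → ‖y‖ < 1 → (ρ x y = 0 ↔ x = y)) ∧
      (∀ x y z, ‖x‖ < 1 → ‖y‖ < 1 → ‖z‖ < 1 → ρ x y ≤ ρ x z + ρ z y)) :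
    ∃ c : ℝ, ∀ x y, x ∈ Set.Ioc (0:ℝ) 1 → y ∈ Set.Ioc (0:ℝ) 1 → P x y = c := by
  obtain ⟨-, -, -, htri⟩ := hρ
  set e : EuclideanSpace ℝ (Fin n) := EuclideanSpace.single (⟨0, hn⟩ : Fin n) (1:ℝ) with he
  have hnorm : ∀ r : ℝ, ‖r • e‖ = |r| := by
    intro r
    rw [norm_smul, he, EuclideanSpace.norm_single, norm_one, mul_one, Real.norm_eq_abs]
  have hsub : ∀ a b : ℝ, ‖a • e - b • e‖ = |a - b| := by
    intro a b
    rw [← sub_smul, hnorm]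
  have h11 : (1:ℝ) ∈ Set.Ioc (0:ℝ) 1 := ⟨one_pos, le_rfl⟩
  -- Step A : P s 1 = P s s for s ∈ (0,1)
  have hA : ∀ s : ℝ, s ∈ Set.Ioo (0:ℝ) 1 → P s 1 = P s s := by
    intro s ⟨hs0, hs1⟩
    have hsm : s ∈ Set.Ioc (0:ℝ) 1 := ⟨hs0, hs1.le⟩
    set r : ℝ := 1 - s with hr
    have hr0 : 0 < r := by simp [hr]; linarith
    have hr1 : r < 1 := by simp [hr]; linarith
    have h1 : ‖r • e‖ < 1 := by rw [hnorm, abs_of_pos hr0]; exact hr1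
    have h2 : ‖(-r) • e‖ < 1 := by rw [hnorm, abs_neg, abs_of_pos hr0]; exact hr1
    have h3 : ‖(0 : EuclideanSpace ℝ (Fin n))‖ < 1 := by simp
    have key := htri (r • e) ((-r) • e) 0 h1 h2 h3
    simp only [hsub, hnorm, sub_zero, zero_sub, norm_neg, norm_zero] at key
    rw [abs_neg, abs_of_pos hr0] at key
    have habs : |r - -r| = 2 * r := by rw [sub_neg_eq_add]; rw [abs_of_pos (by linarith)]; ring
    rw [habs] at key
    have hs' : 1 - r = s := by simp [hr]
    rw [hs'] at key
    rw [hsymm 1 s h11 hsm] at key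
    have hPss : 0 < P s s := hpos s s hsm hsm
    have hPs1 : 0 < P s 1 := hpos s 1 hsm h11
    -- key : 2*r / P s s ≤ r / P s 1 + r / P s 1
    have key2 : 2 * r / P s s ≤ 2 * r / P s 1 := by
      calc 2 * r / P s s ≤ r / P s 1 + r / P s 1 := key
        _ = 2 * r / P s 1 := by ring
    have hle : P s 1 ≤ P s s := by
      rw [div_le_div_iff₀ hPss hPs1] at key2
      nlinarith
    have hge : P s s ≤ P s 1 := hmono s hsm hsm h11 hs1.le
    linarith
  -- P a b = P a a when a ≤ b, a < 1
  have hmin : ∀ a b : ℝ, a ∈ Set.Ioc (0:ℝ) 1 → b ∈ Set.Ioc (0:ℝ) 1 → a ≤ b → a < 1 →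
      P a b = P a a := by
    intro a b ha hb hab ha1
    have h1 : P a b ≤ P a 1 := hmono a ha hb h11 hb.2
    have h2 : P a a ≤ P a b := hmono a ha ha hb hab
    have h3 : P a 1 = P a a := hA a ⟨ha.1, ha1⟩
    linarith
  -- Step B : P t t ≤ P s s for 0 < s < t < 1
  have hB : ∀ s t : ℝ, 0 < s → s < t → t < 1 → P t t ≤ P s s := by
    intro s t hs0 hst ht1
    have hsm : s ∈ Set.Ioc (0:ℝ) 1 := ⟨hs0, by linarith⟩
    have htm : t ∈ Set.Ioc (0:ℝ) 1 := ⟨by linarith, ht1.le⟩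
    set x : ℝ := 1 - s with hx
    set z : ℝ := 1 - t with hz
    set y : ℝ := (1 - t) / 2 with hy
    have hx1 : x < 1 := by simp [hx]; linarith
    have hzx : z < x := by simp [hx, hz]; linarith
    have hy0 : 0 < y := by simp [hy]; linarith
    have hyz : y < z := by simp [hy, hz]; linarith
    have h1 : ‖x • e‖ < 1 := by rw [hnorm, abs_of_pos (by linarith)]; exact hx1
    have h2 : ‖y • e‖ < 1 := by rw [hnorm, abs_of_pos hy0]; linarith
    have h3 : ‖z • e‖ < 1 := by rw [hnorm, abs_of_pos (by linarith)]; linarith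
    have key := htri (x • e) (y • e) (z • e) h1 h2 h3
    simp only [hsub, hnorm] at key
    rw [abs_of_pos (by linarith : (0:ℝ) < x), abs_of_pos hy0, abs_of_pos (by linarith : (0:ℝ) < z),
      abs_of_pos (by linarith : (0:ℝ) < x - y), abs_of_pos (by linarith : (0:ℝ) < x - z),
      abs_of_pos (by linarith : (0:ℝ) < z - y)] at key
    have e1 : 1 - x = s := by simp [hx]
    have e2 : 1 - z = t := by simp [hz]
    rw [e1, e2] at key
    have hym : 1 - y ∈ Set.Ioc (0:ℝ) 1 := ⟨by linarith, by linarith⟩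
    have eq1 : P s (1 - y) = P s s := hmin s (1 - y) hsm hym (by simp [hy]; linarith) (by linarith)
    have eq2 : P s t = P s s := hmin s t hsm htm hst.le (by linarith)
    have eq3 : P t (1 - y) = P t t := hmin t (1 - y) htm hym (by simp [hy]; linarith) ht1
    rw [eq1, eq2, eq3] at key
    -- key : (x - y)/P s s ≤ (x - z)/P s s + (z - y)/P t t
    have hPss : 0 < P s s := hpos s s hsm hsm
    have hPtt : 0 < P t t := hpos t t htm htm
    have key2 : (z - y) / P s s ≤ (z - y) / P t t := by
      have : (x - y) / P s s = (x - z) / P s s + (z - y) / P s s := by ring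
      linarith [key, this]
    rw [div_le_div_iff₀ hPss hPtt] at key2
    nlinarith
  -- g constant on (0,1)
  set c : ℝ := P (1/2) (1/2) with hc
  have hgc : ∀ s : ℝ, s ∈ Set.Ioo (0:ℝ) 1 → P s s = c := by
    have pair : ∀ s t : ℝ, 0 < s → s ≤ t → t < 1 → P s s = P t t := by
      intro s t hs0 hst ht1
      rcases eq_or_lt_of_le hst with rfl | h
      · rfl
      · have h1 := hB s t hs0 h ht1
        have hsm : s ∈ Set.Ioc (0:ℝ) 1 := ⟨hs0, by linarith⟩
        have htm : t ∈ Set.Ioc (0:ℝ) 1 := ⟨by linarith, ht1.le⟩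
        have h2 : P s s ≤ P s t := hmono s hsm hsm htm hst
        have h3 : P s t ≤ P t t := by
          rw [hsymm s t hsm htm]; exact hmono t htm hsm htm hst
        linarith
    intro s ⟨hs0, hs1⟩
    rcases le_total s (1/2) with h | h
    · exact pair s (1/2) hs0 h (by norm_num)
    · exact (pair (1/2) s (by norm_num) h hs1).symm
  -- continuity at (1,1) gives P 1 1 = c
  have hP11 : P 1 1 = c := by
    have hmem : ((1:ℝ), (1:ℝ)) ∈ Set.Ioc (0:ℝ) 1 ×ˢ Set.Ioc (0:ℝ) 1 := ⟨h11, h11⟩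
    have hcw := hcont _ hmem
    have hdiag : Filter.Tendsto (fun s : ℝ => ((s, s) : ℝ × ℝ))
        (nhdsWithin 1 (Set.Ioo 0 1)) (nhdsWithin (1, 1) (Set.Ioc (0:ℝ) 1 ×ˢ Set.Ioc (0:ℝ) 1)) := by
      refine tendsto_nhdsWithin_of_tendsto_nhds_of_eventually_within _ ?_ ?_
      · exact ((continuous_id.prodMk continuous_id).tendsto 1).mono_left nhdsWithin_le_nhds
      · filter_upwards [self_mem_nhdsWithin] with s hs
        exact ⟨⟨hs.1, hs.2.le⟩, ⟨hs.1, hs.2.le⟩⟩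
    have htend : Filter.Tendsto (fun s : ℝ => P s s) (nhdsWithin 1 (Set.Ioo 0 1))
        (nhds (P 1 1)) := hcw.tendsto.comp hdiag
    have hne : (nhdsWithin (1:ℝ) (Set.Ioo 0 1)).NeBot := by
      refine mem_closure_iff_nhdsWithin_neBot.mp ?_
      rw [closure_Ioo (by norm_num : (0:ℝ) ≠ 1)]
      exact ⟨zero_le_one, le_rfl⟩
    have htend' : Filter.Tendsto (fun _ : ℝ => c) (nhdsWithin 1 (Set.Ioo 0 1))
        (nhds (P 1 1)) := by
      refine htend.congr' ?_
      filter_upwards [self_mem_nhdsWithin] with s hs using hgc s hs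
    exact tendsto_nhds_unique htend' tendsto_const_nhds
  refine ⟨c, ?_⟩
  have main : ∀ x y : ℝ, x ∈ Set.Ioc (0:ℝ) 1 → y ∈ Set.Ioc (0:ℝ) 1 → x ≤ y → P x y = c := by
    intro x y hx hy hxy
    rcases lt_or_eq_of_le hx.2 with hx1 | hx1
    · rw [hmin x y hx hy hxy hx1]; exact hgc x ⟨hx.1, hx1⟩
    · have hy1 : y = 1 := le_antisymm hy.2 (hx1 ▸ hxy)
      rw [hx1, hy1]; exact hP11
  intro x y hx hy
  rcases le_total x y with h | h
  · exact main x y hx hy h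
  · rw [hsymm x y hx hy]; exact main y x hy hx h
end
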